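/- arXiv:math/0503327 — 5 statements merged into one kernel-verified Lean document; each statement's English description precedes it below -/
import Mathlib

section
/- Fix a positive integer m, a Dyck word w of length 2m, and k < 2m with w_{k+1} = 1. Let H be a matching on [2m] with base w avoiding every element of 𝒞 = {C_p : p ≥ 3}, let H' = H[k] and H'' = H[k+1], and let x be the vertex joined to k+1 in H''. Then x is the maximum of its ≈-block in H'; moreover, for every stub y of H'' with y < x and y not in the ≈-block of x in H', the ≈-block of y in H'' equals the ≈-block of y in H', and all the other stubs of H'' form a single ≈-block of H''. -/
/-- `G` is a matching on the vertex set `[n] = {1,…,n}`: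
every edge has both endpoints in `[n]`, and every vertex of `[n]` has exactly one neighbour. -/
def IsMatchingOn (n : ℕ) (G : SimpleGraph ℕ) : Prop :=
  (∀ u v : ℕ, G.Adj u v → 1 ≤ u ∧ u ≤ n ∧ 1 ≤ v ∧ v ≤ n) ∧
  (∀ v : ℕ, 1 ≤ v → v ≤ n → ∃! u : ℕ, G.Adj v u)

/-- `G` contains `H`: there is a monotone edge-preserving injection from the
vertices of `H` to those of `G`. -/
def ContainsPat (G H : SimpleGraph ℕ) : Prop :=
  ∃ f : ℕ → ℕ, StrictMono f ∧ ∀ u v : ℕ, H.Adj u v → G.Adj (f u) (f v)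

/-- `w` (on positions `1,…,n`) is a Dyck word of length `n`: exactly half of its letters
are `1` (`true`), and every prefix has at most half of its letters equal to `1`. -/
def IsDyckWord (n : ℕ) (w : ℕ → Bool) : Prop :=
  2 * ((Finset.Icc 1 n).filter fun i => w i = true).card = n ∧
  ∀ k : ℕ, k ≤ n → 2 * ((Finset.Icc 1 k).filter fun i => w i = true).card ≤ k

/-- The matching `G` on `[n]` has base `w`: `w i = 1` iff `i` is an r-vertex. -/
def HasBase (n : ℕ) (G : SimpleGraph ℕ) (w : ℕ → Bool) : Prop :=
  ∀ i : ℕ, 1 ≤ i → i ≤ n → (w i = true ↔ ∃ j : ℕ, j < i ∧ G.Adj i j)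

/-- The matching `M_123` on `[6]`, with edges `{1,4},{2,5},{3,6}`. -/
def M123 : SimpleGraph ℕ := SimpleGraph.fromRel fun u v => (u, v) ∈ [(1,4),(2,5),(3,6)]
/-- The matching `M_132` on `[6]`, with edges `{1,4},{2,6},{3,5}`. -/
def M132 : SimpleGraph ℕ := SimpleGraph.fromRel fun u v => (u, v) ∈ [(1,4),(2,6),(3,5)]
/-- The matching `M_213` on `[6]`, with edges `{1,5},{2,4},{3,6}`. -/
def M213 : SimpleGraph ℕ := SimpleGraph.fromRel fun u v => (u, v) ∈ [(1,5),(2,4),(3,6)]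
/-- The matching `M_231` on `[6]`, with edges `{1,5},{2,6},{3,4}`. -/
def M231 : SimpleGraph ℕ := SimpleGraph.fromRel fun u v => (u, v) ∈ [(1,5),(2,6),(3,4)]
/-- The matching `M_321` on `[6]`, with edges `{1,6},{2,5},{3,4}`. -/
def M321 : SimpleGraph ℕ := SimpleGraph.fromRel fun u v => (u, v) ∈ [(1,6),(2,5),(3,4)]

/-- The matching `C_k` on `[2k]`, with edges `{2i-1, 2i+2}` for `1 ≤ i < k`
together with the edge `{2, 2k-1}`. -/
def Ck (k : ℕ) : SimpleGraph ℕ :=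
  SimpleGraph.fromRel fun u v =>
    (∃ i : ℕ, 1 ≤ i ∧ i < k ∧ u = 2*i - 1 ∧ v = 2*i + 2) ∨ (u = 2 ∧ v = 2*k - 1)

/-- `G[k]`: the subgraph of `G` induced by the vertex set `[k]`. -/
def restrictG (G : SimpleGraph ℕ) (k : ℕ) : SimpleGraph ℕ :=
  SimpleGraph.fromRel fun u v => G.Adj u v ∧ u ≤ k ∧ v ≤ k

/-- A stub of a graph on `[k]`: an isolated vertex. -/
def IsStubOn (k : ℕ) (G : SimpleGraph ℕ) (v : ℕ) : Prop :=
  1 ≤ v ∧ v ≤ k ∧ ∀ u : ℕ, ¬ G.Adj v u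

/-- The relation `∼`: `u ∼ v` iff `u = v` or some edge `{x,y}` satisfies
`x < u < y` and `x < v < y`. -/
def SimRel (G : SimpleGraph ℕ) (u v : ℕ) : Prop :=
  u = v ∨ ∃ x y : ℕ, G.Adj x y ∧ x < u ∧ u < y ∧ x < v ∧ v < y

/-- The edges `{a,b}` and `{c,d}` (with `a < b`, `c < d`) cross. -/
def EdgesCross (a b c d : ℕ) : Prop :=
  (a < c ∧ c < b ∧ b < d) ∨ (c < a ∧ a < d ∧ d < b)

/-- The relation `≈`: `u ≈ v` iff `u = v` or there is a sequence of edges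
`e_1,…,e_p` (`p ≥ 1`), consecutive ones crossing, with `e_1` spanning `u` and `e_p` spanning `v`. -/
def ApproxRel (G : SimpleGraph ℕ) (u v : ℕ) : Prop :=
  u = v ∨ ∃ p : ℕ, 1 ≤ p ∧ ∃ x y : ℕ → ℕ,
    (∀ i : ℕ, i < p → x i < y i ∧ G.Adj (x i) (y i)) ∧
    (∀ i : ℕ, i + 1 < p → EdgesCross (x i) (y i) (x (i+1)) (y (i+1))) ∧
    x 0 < u ∧ u < y 0 ∧ x (p-1) < v ∧ v < y (p-1)

def CChain (G : SimpleGraph ℕ) (p : ℕ) (a b : ℕ → ℕ) : Prop :=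
  (∀ i, i < p → a i < b i ∧ G.Adj (a i) (b i)) ∧
  (∀ i, i + 1 < p → EdgesCross (a i) (b i) (a (i+1)) (b (i+1)))

lemma edgesCross_symm {a b c d : ℕ} (h : EdgesCross a b c d) : EdgesCross c d a b := by
  unfold EdgesCross at *; tauto

lemma adj_restrict {G : SimpleGraph ℕ} {k u v : ℕ} :
    (restrictG G k).Adj u v ↔ G.Adj u v ∧ u ≤ k ∧ v ≤ k := by
  simp only [restrictG, SimpleGraph.fromRel_adj]
  constructor
  · rintro ⟨hne, h | h⟩
    · exact h
    · exact ⟨h.1.symm, h.2.2, h.2.1⟩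
  · intro h; exact ⟨h.1.ne, Or.inl h⟩

lemma restrict_mono {G : SimpleGraph ℕ} {k l u v : ℕ} (hkl : k ≤ l)
    (h : (restrictG G k).Adj u v) : (restrictG G l).Adj u v := by
  rw [adj_restrict] at *
  exact ⟨h.1, h.2.1.trans hkl, h.2.2.trans hkl⟩

section chains
variable {G : SimpleGraph ℕ}

lemma chain_single {a b : ℕ} (hab : a < b) (hadj : G.Adj a b) :
    CChain G 1 (fun _ => a) (fun _ => b) := by
  constructor
  · intro i _; exact ⟨hab, hadj⟩
  · intro i hi; omega

lemma chain_reverse {p : ℕ} {a b : ℕ → ℕ} (h : CChain G p a b) :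
    CChain G p (fun i => a (p-1-i)) (fun i => b (p-1-i)) := by
  constructor
  · intro i hi; exact h.1 _ (by omega)
  · intro i hi
    have h2 := h.2 (p-2-i) (by omega)
    have e1 : p - 1 - i = p - 2 - i + 1 := by omega
    have e2 : p - 1 - (i+1) = p - 2 - i := by omega
    show EdgesCross (a (p-1-i)) (b (p-1-i)) (a (p-1-(i+1))) (b (p-1-(i+1)))
    rw [e1, e2]
    exact edgesCross_symm h2

lemma chain_append {p q : ℕ} {a b c d : ℕ → ℕ} (hp : 1 ≤ p) (hq : 1 ≤ q)
    (h1 : CChain G p a b) (h2 : CChain G q c d)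
    (hcr : EdgesCross (a (p-1)) (b (p-1)) (c 0) (d 0)) :
    CChain G (p+q) (fun i => if i < p then a i else c (i-p))
      (fun i => if i < p then b i else d (i-p)) := by
  constructor
  · intro i hi
    by_cases hip : i < p
    · simp only [hip, if_pos]; exact h1.1 _ hip
    · simp only [hip, if_neg, if_false]; exact h2.1 _ (by omega)
  · intro i hi
    rcases lt_trichotomy (i+1) p with h | h | h
    · simp only [show i < p by omega, h, if_pos]
      exact h1.2 _ h
    · simp only [show i < p by omega, show ¬ (i+1 < p) by omega, if_pos, if_neg, if_false]
      have : i = p - 1 := by omega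
      have : i + 1 - p = 0 := by omega
      simp_all
    · simp only [show ¬ (i < p) by omega, show ¬ (i+1 < p) by omega, if_neg, if_false]
      have e : i + 1 - p = (i - p) + 1 := by omega
      rw [e]
      exact h2.2 _ (by omega)

/-- if a chain spans an interval containing t, some edge of it covers t -/
lemma chain_interval : ∀ (p : ℕ) (a b : ℕ → ℕ) (t : ℕ), CChain G p a b → 1 ≤ p →
    a 0 < t → t < b (p-1) → ∃ i, i < p ∧ a i < t ∧ t < b i := by
  intro p
  induction p with
  | zero => intro a b t _ h; omega
  | succ n ih =>
    intro a b t hc _ h0 hlast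
    by_cases hb : t < b 0
    · exact ⟨0, by omega, h0, hb⟩
    · have hn : 1 ≤ n := by
        rcases Nat.eq_zero_or_pos n with h | h
        · subst h; simp at hlast; omega
        · exact h
      have hcr := hc.2 0 (by omega)
      norm_num at hcr
      have hc' : CChain G n (fun i => a (i+1)) (fun i => b (i+1)) := by
        constructor
        · intro i hi; exact hc.1 _ (by omega)
        · intro i hi; exact hc.2 _ (by omega)
      have h1 : a 1 < t := by
        rcases hcr with ⟨h1, h2, h3⟩ | ⟨h1, h2, h3⟩ <;> omega
      have h2 : t < b (n+1-1) := hlast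
      obtain ⟨i, hi, hai, hbi⟩ := ih _ _ t hc' hn h1 (by
        have e : n - 1 + 1 = n + 1 - 1 := by omega
        rw [e]; exact h2)
      exact ⟨i+1, by omega, hai, hbi⟩

end chains

section approx
variable {G : SimpleGraph ℕ} {u v w : ℕ}

lemma approxRel_of_chain {p : ℕ} {a b : ℕ → ℕ} (hc : CChain G p a b) (hp : 1 ≤ p)
    (h1 : a 0 < u) (h2 : u < b 0) (h3 : a (p-1) < v) (h4 : v < b (p-1)) :
    ApproxRel G u v :=
  Or.inr ⟨p, hp, a, b, hc.1, hc.2, h1, h2, h3, h4⟩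

lemma approxRel_elim (h : ApproxRel G u v) :
    u = v ∨ ∃ p a b, 1 ≤ p ∧ CChain G p a b ∧
      a 0 < u ∧ u < b 0 ∧ a (p-1) < v ∧ v < b (p-1) := by
  rcases h with h | ⟨p, hp, a, b, h1, h2, h3⟩
  · exact Or.inl h
  · exact Or.inr ⟨p, a, b, hp, ⟨h1, h2⟩, h3⟩

lemma approx_refl : ApproxRel G u u := Or.inl rfl

lemma approx_symm (h : ApproxRel G u v) : ApproxRel G v u := by
  rcases approxRel_elim h with h | ⟨p, a, b, hp, hc, h1, h2, h3, h4⟩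
  · exact Or.inl h.symm
  · have hr := chain_reverse hc
    refine approxRel_of_chain hr hp ?_ ?_ ?_ ?_
    · simpa using h3
    · simpa using h4
    · have e : p - 1 - (p-1) = 0 := by omega
      show a (p-1-(p-1)) < u
      rw [e]; exact h1
    · show u < b (p-1-(p-1))
      have e : p - 1 - (p-1) = 0 := by omega
      rw [e]; exact h2

/-- append chain A with the suffix of chain B starting at index s -/
lemma append_reach {p q s : ℕ} {a b c d : ℕ → ℕ}
    (hA : CChain G p a b) (hB : CChain G q c d) (hp : 1 ≤ p) (hs : s < q)
    (hcr : EdgesCross (a (p-1)) (b (p-1)) (c s) (d s))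
    (hu1 : a 0 < u) (hu2 : u < b 0) (hw1 : c (q-1) < w) (hw2 : w < d (q-1)) :
    ApproxRel G u w := by
  have hB' : CChain G (q-s) (fun i => c (i+s)) (fun i => d (i+s)) := by
    constructor
    · intro i hi; exact hB.1 _ (by omega)
    · intro i hi
      have := hB.2 (i+s) (by omega)
      have e : i + s + 1 = i + 1 + s := by omega
      rwa [e] at this
  have happ := chain_append hp (by omega) hA hB' (by simpa using hcr)
  refine approxRel_of_chain happ (by omega) ?_ ?_ ?_ ?_
  · simp only [show (0:ℕ) < p from hp, if_pos]; exact hu1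
  · simp only [show (0:ℕ) < p from hp, if_pos]; exact hu2
  · have e1 : ¬ (p + (q-s) - 1 < p) := by omega
    simp only [e1, if_neg, if_false]
    have e2 : p + (q - s) - 1 - p + s = q - 1 := by omega
    rw [e2]; exact hw1
  · have e1 : ¬ (p + (q-s) - 1 < p) := by omega
    simp only [e1, if_neg, if_false]
    have e2 : p + (q - s) - 1 - p + s = q - 1 := by omega
    rw [e2]; exact hw2

end approx

section matching
variable {n : ℕ} {H : SimpleGraph ℕ}

lemma matching_unique (hH : IsMatchingOn n H) {a b c : ℕ} (h1 : H.Adj a b)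
    (h2 : H.Adj a c) : b = c := by
  obtain ⟨u, _, huniq⟩ := hH.2 a (hH.1 a b h1).1 (hH.1 a b h1).2.1
  rw [huniq b h1, huniq c h2]

lemma edges_eq_or_disjoint (hH : IsMatchingOn n H) {a b c d : ℕ}
    (hab : H.Adj a b) (hcd : H.Adj c d) (h1 : a < b) (h2 : c < d) :
    (a = c ∧ b = d) ∨ (a ≠ c ∧ a ≠ d ∧ b ≠ c ∧ b ≠ d) := by
  by_cases hac : a = c
  · subst hac; exact Or.inl ⟨rfl, matching_unique hH hab hcd⟩
  · right
    refine ⟨hac, ?_, ?_, ?_⟩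
    · intro h; subst h
      have := matching_unique hH hab hcd.symm
      omega
    · intro h; subst h
      have := matching_unique hH hab.symm hcd
      omega
    · intro h; subst h
      have := matching_unique hH hab.symm hcd.symm
      omega

end matching

section trans
variable {n : ℕ} {H : SimpleGraph ℕ} {G : SimpleGraph ℕ} {u v w : ℕ}

lemma trans_helper (hH : IsMatchingOn n H) (hsub : ∀ a b, G.Adj a b → H.Adj a b)
    {p q : ℕ} {a b c d : ℕ → ℕ}
    (hA : CChain G p a b) (hB : CChain G q c d) (hp : 1 ≤ p) (hq : 1 ≤ q)
    (hu1 : a 0 < u) (hu2 : u < b 0)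
    (hv1 : a (p-1) < v) (hv2 : v < b (p-1)) (hv3 : c 0 < v) (hv4 : v < d 0)
    (hw1 : c (q-1) < w) (hw2 : w < d (q-1))
    (hno : ¬ (c 0 < a (p-1) ∧ b (p-1) < d 0)) : ApproxRel G u w := by
  -- trichotomy helper comparing edge (a (p-1), b (p-1)) with edge j of B
  have tri : ∀ j, j < q →
      (a (p-1) = c j ∧ b (p-1) = d j) ∨ (a (p-1) ≠ c j ∧ a (p-1) ≠ d j ∧
        b (p-1) ≠ c j ∧ b (p-1) ≠ d j) := by
    intro j hj
    exact edges_eq_or_disjoint hH (hsub _ _ (hA.1 (p-1) (by omega)).2)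
      (hsub _ _ (hB.1 j hj).2) (hA.1 (p-1) (by omega)).1 (hB.1 j hj).1
  -- handle the "equal edge" situation at index j
  have eqcase : ∀ j, j < q → a (p-1) = c j → b (p-1) = d j → ApproxRel G u w := by
    intro j hj he1 he2
    rcases Nat.lt_or_ge (j+1) q with hj1 | hj1
    · refine append_reach hA hB hp hj1 ?_ hu1 hu2 hw1 hw2
      rw [he1, he2]
      exact hB.2 j hj1
    · have hjq : j = q - 1 := by omega
      refine approxRel_of_chain hA hp hu1 hu2 ?_ ?_
      · rw [he1, hjq]; exact hw1
      · rw [he2, hjq]; exact hw2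
  have key : ∀ j, j < q → ApproxRel G u w ∨ (a (p-1) < c j ∧ d j < b (p-1)) := by
    intro j
    induction j with
    | zero =>
      intro hj
      rcases tri 0 hj with ⟨he1, he2⟩ | hdis
      · exact Or.inl (eqcase 0 hj he1 he2)
      · have hord : EdgesCross (a (p-1)) (b (p-1)) (c 0) (d 0) ∨
            (a (p-1) < c 0 ∧ d 0 < b (p-1)) := by
          have h1 := (hA.1 (p-1) (by omega)).1
          have h2 := (hB.1 0 hq).1
          unfold EdgesCross
          omega
        rcases hord with hcr | hnest
        · exact Or.inl (append_reach hA hB hp hq hcr hu1 hu2 hw1 hw2)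
        · exact Or.inr hnest
    | succ i ih =>
      intro hj
      rcases ih (by omega) with done | hnest
      · exact Or.inl done
      · have hcr := hB.2 i hj
        rcases tri (i+1) hj with ⟨he1, he2⟩ | hdis
        · exact Or.inl (eqcase (i+1) hj he1 he2)
        · have hord : EdgesCross (a (p-1)) (b (p-1)) (c (i+1)) (d (i+1)) ∨
              (a (p-1) < c (i+1) ∧ d (i+1) < b (p-1)) := by
            have h1 := (hA.1 (p-1) (by omega)).1
            have h2 := (hB.1 (i+1) hj).1
            have h3 := (hB.1 i (by omega)).1
            unfold EdgesCross at hcr ⊢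
            omega
          rcases hord with hcr' | hnest'
          · exact Or.inl (append_reach hA hB hp hj hcr' hu1 hu2 hw1 hw2)
          · exact Or.inr hnest'
  rcases key (q-1) (by omega) with done | hnest
  · exact done
  · exact approxRel_of_chain hA hp hu1 hu2 (by omega) (by omega)

lemma approx_trans (hH : IsMatchingOn n H) (hsub : ∀ a b, G.Adj a b → H.Adj a b)
    (huv : ApproxRel G u v) (hvw : ApproxRel G v w) : ApproxRel G u w := by
  rcases approxRel_elim huv with rfl | ⟨p, a, b, hp, hA, ha1, ha2, ha3, ha4⟩
  · exact hvw
  rcases approxRel_elim hvw with rfl | ⟨q, c, d, hq, hB, hb1, hb2, hb3, hb4⟩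
  · exact huv
  by_cases hno : c 0 < a (p-1) ∧ b (p-1) < d 0
  · -- apply helper to reversed chains
    have hA' := chain_reverse hA
    have hB' := chain_reverse hB
    have hsym : ApproxRel G w u := by
      refine trans_helper (v := v) hH hsub hB' hA' hq hp ?_ ?_ ?_ ?_ ?_ ?_ ?_ ?_ ?_
      · simpa using hb3
      · simpa using hb4
      · show c (q-1-(q-1)) < v
        rw [show q-1-(q-1) = 0 by omega]; exact hb1
      · show v < d (q-1-(q-1))
        rw [show q-1-(q-1) = 0 by omega]; exact hb2
      · simpa using ha3
      · simpa using ha4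
      · show a (p-1-(p-1)) < u
        rw [show p-1-(p-1) = 0 by omega]; exact ha1
      · show u < b (p-1-(p-1))
        rw [show p-1-(p-1) = 0 by omega]; exact ha2
      · show ¬ (a (p-1) < c (q-1-(q-1)) ∧ d (q-1-(q-1)) < b (p-1))
        rw [show q-1-(q-1) = 0 by omega]
        omega
    exact approx_symm hsym
  · exact trans_helper hH hsub hA hB hp hq ha1 ha2 ha3 ha4 hb1 hb2 hb3 hb4 hno

def EdgeOf (G : SimpleGraph ℕ) (e : ℕ × ℕ) : Prop := e.1 < e.2 ∧ G.Adj e.1 e.2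

def Reach (G : SimpleGraph ℕ) : (ℕ×ℕ) → (ℕ×ℕ) → Prop :=
  Relation.ReflTransGen (fun e f => EdgesCross e.1 e.2 f.1 f.2 ∧ EdgeOf G f)

section reach
variable {G : SimpleGraph ℕ} {e f : ℕ×ℕ}

lemma reach_edge (h : Reach G e f) (he : EdgeOf G e) : EdgeOf G f := by
  induction h with
  | refl => exact he
  | tail h1 h2 ih => exact h2.2

lemma reach_symm (h : Reach G e f) (he : EdgeOf G e) : Reach G f e := by
  induction h with
  | refl => exact Relation.ReflTransGen.refl
  | @tail b c h1 h2 ih =>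
    exact Relation.ReflTransGen.head ⟨edgesCross_symm h2.1, reach_edge h1 he⟩ ih

lemma reach_left {t : ℕ} (h : Reach G e f) (ht : e.2 ≤ t)
    (hnc : ∀ g, Reach G e g → ¬ (g.1 < t ∧ t < g.2)) : f.2 ≤ t := by
  induction h with
  | refl => exact ht
  | @tail b c h1 h2 ih =>
    have hb : b.2 ≤ t := ih
    have hc := hnc c (h1.tail h2)
    rcases h2.1 with ⟨u1, u2, u3⟩ | ⟨u1, u2, u3⟩ <;> omega

end reach

/-- The invariant for the greedy staircase construction. -/
structure GreedyInv (G : SimpleGraph ℕ) (e1 : ℕ×ℕ) (x y : ℕ) (n : ℕ) (A B : ℕ → ℕ) :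
    Prop where
  edge : ∀ i, i ≤ n → EdgeOf G (A i, B i)
  reach : ∀ i, i ≤ n → Reach G e1 (A i, B i)
  cover0 : A 0 < x ∧ x < B 0
  mono : ∀ i, i < n → A i < A (i+1) ∧ A (i+1) < B i ∧ B i < B (i+1)
  sep0 : 1 ≤ n → x < A 1
  sep : ∀ i, i + 2 ≤ n → B i < A (i+2)
  front_lt : (if n = 0 then x else B (n-1)) < y
  maxB : ∀ e, EdgeOf G e → Reach G e1 e → e.1 < (if n = 0 then x else B (n-1)) →
         (if n = 0 then x else B (n-1)) < e.2 → e.2 ≤ B n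
  covf : A n < (if n = 0 then x else B (n-1)) ∧ (if n = 0 then x else B (n-1)) < B n

lemma greedy_term {m k x y z n : ℕ} {H : SimpleGraph ℕ} {A B : ℕ → ℕ} {e1 : ℕ×ℕ}
    (hH : IsMatchingOn (2*m) H)
    (havoid : ∀ p : ℕ, 3 ≤ p → ¬ ContainsPat H (Ck p))
    (hxk1 : H.Adj x (k+1)) (hxy : x < y) (hyz : H.Adj y z) (hz : k+1 < z)
    (inv : GreedyInv (restrictG H k) e1 x y n A B) (hterm : y < B n) : False := by
  have hed : ∀ i, i ≤ n → A i < B i ∧ H.Adj (A i) (B i) ∧ 1 ≤ A i ∧ B i ≤ k := by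
    intro i hi
    obtain ⟨hlt, hadj⟩ := inv.edge i hi
    rw [adj_restrict] at hadj
    exact ⟨hlt, hadj.1, (hH.1 _ _ hadj.1).1, hadj.2.2⟩
  set f : ℕ → ℕ := fun t =>
    if t = 0 then 0
    else if t = 2 then x
    else if t = 2*n+5 then k+1
    else if 2*n+6 ≤ t then z + (t - (2*n+6))
    else if t = 2*n+3 then y
    else if t % 2 = 1 then A ((t-1)/2)
    else B (t/2 - 2) with hfdef
  have hf0 : f 0 = 0 := by simp [hfdef]
  have hfx : f 2 = x := by simp [hfdef]
  have hfk1 : f (2*n+5) = k+1 := by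
    show (if 2*n+5 = 0 then 0 else if 2*n+5 = 2 then x else if 2*n+5 = 2*n+5 then k+1
      else if 2*n+6 ≤ 2*n+5 then z + (2*n+5 - (2*n+6)) else if 2*n+5 = 2*n+3 then y
      else if (2*n+5) % 2 = 1 then A ((2*n+5-1)/2) else B ((2*n+5)/2 - 2)) = k+1
    rw [if_neg (by omega), if_neg (by omega), if_pos rfl]
  have hfz : ∀ t, 2*n+6 ≤ t → f t = z + (t - (2*n+6)) := by
    intro t ht
    show (if t = 0 then 0 else if t = 2 then x else if t = 2*n+5 then k+1
      else if 2*n+6 ≤ t then z + (t - (2*n+6)) else if t = 2*n+3 then y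
      else if t % 2 = 1 then A ((t-1)/2) else B (t/2 - 2)) = z + (t - (2*n+6))
    rw [if_neg (by omega), if_neg (by omega), if_neg (by omega), if_pos ht]
  have hfy : f (2*n+3) = y := by
    show (if 2*n+3 = 0 then 0 else if 2*n+3 = 2 then x else if 2*n+3 = 2*n+5 then k+1
      else if 2*n+6 ≤ 2*n+3 then z + (2*n+3 - (2*n+6)) else if 2*n+3 = 2*n+3 then y
      else if (2*n+3) % 2 = 1 then A ((2*n+3-1)/2) else B ((2*n+3)/2 - 2)) = y
    rw [if_neg (by omega), if_neg (by omega), if_neg (by omega), if_neg (by omega),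
      if_pos rfl]
  have hfA : ∀ i, i ≤ n → f (2*i+1) = A i := by
    intro i hi
    show (if 2*i+1 = 0 then 0 else if 2*i+1 = 2 then x else if 2*i+1 = 2*n+5 then k+1
      else if 2*n+6 ≤ 2*i+1 then z + (2*i+1 - (2*n+6)) else if 2*i+1 = 2*n+3 then y
      else if (2*i+1) % 2 = 1 then A ((2*i+1-1)/2) else B ((2*i+1)/2 - 2)) = A i
    rw [if_neg (by omega), if_neg (by omega), if_neg (by omega), if_neg (by omega),
      if_neg (by omega), if_pos (by omega)]
    congr 1; omega
  have hfB : ∀ i, i ≤ n → f (2*i+4) = B i := by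
    intro i hi
    show (if 2*i+4 = 0 then 0 else if 2*i+4 = 2 then x else if 2*i+4 = 2*n+5 then k+1
      else if 2*n+6 ≤ 2*i+4 then z + (2*i+4 - (2*n+6)) else if 2*i+4 = 2*n+3 then y
      else if (2*i+4) % 2 = 1 then A ((2*i+4-1)/2) else B ((2*i+4)/2 - 2)) = B i
    rw [if_neg (by omega), if_neg (by omega), if_neg (by omega), if_neg (by omega),
      if_neg (by omega), if_neg (by omega)]
    congr 1; omega
  -- strict monotonicity
  have hmono : StrictMono f := by
    apply strictMono_nat_of_lt_succ
    intro t
    rcases Nat.lt_or_ge t (2*n+6) with ht | ht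
    · by_cases h0 : t = 0
      · subst h0
        rw [hf0, show (0:ℕ)+1 = 2*0+1 by ring, hfA 0 (by omega)]
        exact (hed 0 (by omega)).2.2.1
      by_cases h1 : t = 1
      · subst h1
        rw [show (1:ℕ)+1 = 2 by ring, hfx, show (1:ℕ) = 2*0+1 by ring, hfA 0 (by omega)]
        exact inv.cover0.1
      by_cases h2 : t = 2
      · subst h2
        rw [hfx]
        by_cases hn : n = 0
        · rw [show (2:ℕ)+1 = 2*n+3 by omega, hfy]; exact hxy
        · rw [show (2:ℕ)+1 = 2*1+1 by ring, hfA 1 (by omega)]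
          exact inv.sep0 (by omega)
      by_cases hy' : t = 2*n+3
      · subst hy'
        rw [hfy, show 2*n+3+1 = 2*n+4 by ring, show 2*n+4 = 2*n+4 by rfl,
          hfB n (le_refl n)]
        exact hterm
      by_cases h4 : t = 2*n+4
      · subst h4
        rw [hfB n (le_refl n), show 2*n+4+1 = 2*n+5 by ring, hfk1]
        have := (hed n (le_refl n)).2.2.2
        omega
      by_cases h5 : t = 2*n+5
      · subst h5
        rw [hfk1, show 2*n+5+1 = 2*n+6 by ring, hfz _ (le_refl _)]
        omega
      -- now 3 ≤ t ≤ 2n+2, and n ≥ 1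
      have ht3 : 3 ≤ t := by omega
      have ht2 : t ≤ 2*n+2 := by omega
      have hn1 : 1 ≤ n := by omega
      by_cases hodd : t % 2 = 1
      · obtain ⟨j, hj⟩ : ∃ j, t = 2*j+1 := ⟨(t-1)/2, by omega⟩
        have hj1 : 1 ≤ j := by omega
        have hjn : j ≤ n := by omega
        rw [hj, hfA j hjn, show 2*j+1+1 = 2*(j-1)+4 by omega, hfB (j-1) (by omega)]
        have := (inv.mono (j-1) (by omega)).2.1
        have e : j - 1 + 1 = j := by omega
        rw [e] at this
        exact this
      · obtain ⟨i, hi⟩ : ∃ i, t = 2*i+4 := ⟨(t-4)/2, by omega⟩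
        have hin : i ≤ n-1 := by omega
        rw [hi, hfB i (by omega)]
        by_cases hlast : i = n-1
        · rw [show 2*i+4+1 = 2*n+3 by omega, hfy]
          have := inv.front_lt
          rw [if_neg (by omega)] at this
          rw [hlast]
          exact this
        · rw [show 2*i+4+1 = 2*(i+2)+1 by omega, hfA (i+2) (by omega)]
          exact inv.sep i (by omega)
    · rw [hfz t ht, hfz (t+1) (by omega)]
      omega
  -- adjacency preservation
  have hadj : ∀ u v, (Ck (n+3)).Adj u v → H.Adj (f u) (f v) := by
    have key : ∀ u v, ((∃ i : ℕ, 1 ≤ i ∧ i < n+3 ∧ u = 2*i - 1 ∧ v = 2*i + 2) ∨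
        (u = 2 ∧ v = 2*(n+3) - 1)) → H.Adj (f u) (f v) := by
      rintro u v (⟨i, hi1, hi2, rfl, rfl⟩ | ⟨rfl, rfl⟩)
      · by_cases hin : i ≤ n+1
        · rw [show 2*i-1 = 2*(i-1)+1 by omega, hfA (i-1) (by omega),
            show 2*i+2 = 2*(i-1)+4 by omega, hfB (i-1) (by omega)]
          exact (hed (i-1) (by omega)).2.1
        · have : i = n+2 := by omega
          subst this
          rw [show 2*(n+2)-1 = 2*n+3 by omega, hfy, show 2*(n+2)+2 = 2*n+6 by omega,
            hfz _ (le_refl _), show z + (2*n+6 - (2*n+6)) = z by omega]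
          exact hyz
      · rw [hfx, show 2*(n+3)-1 = 2*n+5 by omega, hfk1]
        exact hxk1
    intro u v huv
    rw [Ck, SimpleGraph.fromRel_adj] at huv
    rcases huv.2 with h | h
    · exact key u v h
    · exact (key v u h).symm
  exact havoid (n+3) (by omega) ⟨f, hmono, hadj⟩

lemma greedy_false {m k x y z : ℕ} {H : SimpleGraph ℕ} {e1 ey : ℕ×ℕ}
    (hH : IsMatchingOn (2*m) H)
    (havoid : ∀ p : ℕ, 3 ≤ p → ¬ ContainsPat H (Ck p))
    (hxk1 : H.Adj x (k+1)) (hxy : x < y)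
    (hxstub : ∀ u, ¬ (restrictG H k).Adj x u)
    (hyz : H.Adj y z) (hz : k+1 < z)
    (he1 : EdgeOf (restrictG H k) e1) (he1x : e1.1 < x ∧ x < e1.2)
    (hey : Reach (restrictG H k) e1 ey) (heyc : ey.1 < y ∧ y < ey.2) : False := by
  classical
  set G' := restrictG H k with hG'
  have hedge : ∀ e : ℕ×ℕ, EdgeOf G' e → H.Adj e.1 e.2 ∧ 1 ≤ e.1 ∧ e.2 ≤ k := by
    intro e he
    have := he.2
    rw [hG', adj_restrict] at this
    exact ⟨this.1, (hH.1 _ _ this.1).1, this.2.2⟩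
  have hyk : y ≤ k := by
    have := hedge ey (reach_edge hey he1)
    omega
  have hynotend : ∀ e : ℕ×ℕ, EdgeOf G' e → e.1 ≠ y ∧ e.2 ≠ y := by
    intro e he
    have h1 := (hedge e he).1
    constructor
    · intro h; rw [h] at h1
      have := matching_unique hH h1 hyz
      have := (hedge e he).2.2
      omega
    · intro h; rw [h] at h1
      have := matching_unique hH h1.symm hyz
      have h2 := he.1
      have := (hedge e he).2.2
      omega
  have hxnotend : ∀ e : ℕ×ℕ, EdgeOf G' e → e.1 ≠ x ∧ e.2 ≠ x := by
    intro e he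
    constructor
    · intro h
      exact hxstub e.2 (h ▸ he.2)
    · intro h
      exact hxstub e.1 (h ▸ he.2.symm)
  -- the step: extend the staircase
  have step : ∀ n A B, GreedyInv G' e1 x y n A B → B n < y →
      ∃ A' B', GreedyInv G' e1 x y (n+1) A' B' ∧ B n < B' (n+1) ∧ B' (n+1) ≤ k := by
    intro n A B inv hlt
    -- there is an edge of the component covering B n
    have hcov : ∃ e : ℕ×ℕ, EdgeOf G' e ∧ Reach G' e1 e ∧ e.1 < B n ∧ B n < e.2 := by
      by_contra hnone
      push_neg at hnone
      have hAB := inv.edge n (le_refl n)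
      have hrAB := inv.reach n (le_refl n)
      have hr1 : Reach G' (A n, B n) ey :=
        Relation.ReflTransGen.trans (reach_symm hrAB he1) hey
      have hle : ey.2 ≤ B n := by
        refine reach_left hr1 (le_refl _) ?_
        intro g hg hc
        have hgr : Reach G' e1 g := Relation.ReflTransGen.trans hrAB hg
        have hge : EdgeOf G' g := reach_edge hg hAB
        have := hnone g hge hgr hc.1
        omega
      omega
    set P : ℕ → Prop := fun bb => ∃ aa, EdgeOf G' (aa, bb) ∧ Reach G' e1 (aa, bb) ∧
      aa < B n ∧ B n < bb with hP
    obtain ⟨e, he, her, hec1, hec2⟩ := hcov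
    have hPe : P e.2 := ⟨e.1, he, her, hec1, hec2⟩
    have hek : e.2 ≤ k := (hedge e he).2.2
    set b' := Nat.findGreatest P k with hb'
    have hPb' : P b' := Nat.findGreatest_spec hek hPe
    have hmax : ∀ g : ℕ×ℕ, EdgeOf G' g → Reach G' e1 g → g.1 < B n → B n < g.2 →
        g.2 ≤ b' := by
      intro g hg hgr hg1 hg2
      by_contra hcon
      push_neg at hcon
      have hgk : g.2 ≤ k := (hedge g hg).2.2
      exact Nat.findGreatest_is_greatest hcon hgk ⟨g.1, hg, hgr, hg1, hg2⟩
    obtain ⟨a', ha'e, ha'r, ha'1, ha'2⟩ := hPb'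
    have hb'k : b' ≤ k := by
      have := (hedge _ ha'e).2.2
      exact this
    have hfr2 : (if n = 0 then x else B (n-1)) < B n := inv.covf.2
    have hfr1 : A n < (if n = 0 then x else B (n-1)) := inv.covf.1
    -- a' is above the old frontier
    have ha'fr : (if n = 0 then x else B (n-1)) < a' := by
      have hge : (if n = 0 then x else B (n-1)) ≤ a' := by
        by_contra hcon
        push_neg at hcon
        have h5 : b' ≤ B n := inv.maxB (a', b') ha'e ha'r hcon (by
          show (if n = 0 then x else B (n-1)) < b'
          omega)
        omega
      rcases Nat.lt_or_ge (if n = 0 then x else B (n-1)) a' with h | h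
      · exact h
      · exfalso
        have heq : (if n = 0 then x else B (n-1)) = a' := by omega
        by_cases hn : n = 0
        · rw [if_pos hn] at heq
          exact (hxnotend _ ha'e).1 heq.symm
        · rw [if_neg hn] at heq
          have h1 : H.Adj (A (n-1)) (B (n-1)) := (hedge _ (inv.edge (n-1) (by omega))).1
          have h2 : H.Adj a' b' := (hedge _ ha'e).1
          rw [← heq] at h2
          have h6 := matching_unique hH h1.symm h2
          have h3 : A (n-1) < B (n-1) := (inv.edge (n-1) (by omega)).1
          rw [if_neg hn] at hfr2
          omega
    set A' : ℕ → ℕ := fun i => if i = n+1 then a' else A i with hA'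
    set B' : ℕ → ℕ := fun i => if i = n+1 then b' else B i with hB'
    have hA'lt : ∀ i, i ≠ n+1 → A' i = A i := fun i h => if_neg h
    have hA'top : ∀ i, i = n+1 → A' i = a' := fun i h => if_pos h
    have hB'lt : ∀ i, i ≠ n+1 → B' i = B i := fun i h => if_neg h
    have hB'top : ∀ i, i = n+1 → B' i = b' := fun i h => if_pos h
    refine ⟨A', B', ⟨?_, ?_, ?_, ?_, ?_, ?_, ?_, ?_, ?_⟩, ?_, ?_⟩
    · intro i hi
      by_cases h : i = n+1
      · rw [hA'top i h, hB'top i h]; exact ha'e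
      · rw [hA'lt i h, hB'lt i h]; exact inv.edge i (by omega)
    · intro i hi
      by_cases h : i = n+1
      · rw [hA'top i h, hB'top i h]; exact ha'r
      · rw [hA'lt i h, hB'lt i h]; exact inv.reach i (by omega)
    · rw [hA'lt 0 (by omega), hB'lt 0 (by omega)]; exact inv.cover0
    · intro i hi
      by_cases h : i = n
      · subst h
        rw [hA'lt i (by omega), hA'top (i+1) rfl, hB'lt i (by omega), hB'top (i+1) rfl]
        exact ⟨by omega, by omega, by omega⟩
      · rw [hA'lt i (by omega), hA'lt (i+1) (by omega), hB'lt i (by omega),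
          hB'lt (i+1) (by omega)]
        exact inv.mono i (by omega)
    · intro _
      by_cases hn : n = 0
      · rw [hA'top 1 (by omega)]
        rw [if_pos hn] at ha'fr
        exact ha'fr
      · rw [hA'lt 1 (by omega)]
        exact inv.sep0 (by omega)
    · intro i hi
      by_cases h : i + 2 = n + 1
      · rw [hB'lt i (by omega), hA'top (i+2) h]
        rw [if_neg (by omega)] at ha'fr
        have hieq : i = n - 1 := by omega
        rw [hieq]
        exact ha'fr
      · rw [hB'lt i (by omega), hA'lt (i+2) h]
        exact inv.sep i (by omega)
    · rw [if_neg (show ¬ (n+1 = 0) by omega), Nat.add_sub_cancel, hB'lt n (by omega)]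
      exact hlt
    · intro g hg hgr h1 h2
      rw [if_neg (show ¬ (n+1 = 0) by omega), Nat.add_sub_cancel, hB'lt n (by omega)]
        at h1 h2
      rw [hB'top (n+1) rfl]
      exact hmax g hg hgr h1 h2
    · rw [hA'top (n+1) rfl, hB'top (n+1) rfl,
        if_neg (show ¬ (n+1 = 0) by omega), Nat.add_sub_cancel, hB'lt n (by omega)]
      exact ⟨by omega, by omega⟩
    · rw [hB'top (n+1) rfl]; omega
    · rw [hB'top (n+1) rfl]; exact hb'k
  -- main induction on fuel
  have main : ∀ d n A B, GreedyInv G' e1 x y n A B → k - B n ≤ d → False := by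
    intro d
    induction d with
    | zero =>
      intro n A B inv hd
      have hBk : B n ≤ k := (hedge _ (inv.edge n (le_refl n))).2.2
      have hne : B n ≠ y := (hynotend _ (inv.edge n (le_refl n))).2
      have hlt : y < B n := by omega
      exact greedy_term hH havoid hxk1 hxy hyz hz inv hlt
    | succ d ih =>
      intro n A B inv hd
      have hne : B n ≠ y := (hynotend _ (inv.edge n (le_refl n))).2
      rcases Nat.lt_or_ge y (B n) with hlt | hge
      · exact greedy_term hH havoid hxk1 hxy hyz hz inv hlt
      · have hlt' : B n < y := by omega
        obtain ⟨A', B', inv', hgt, hle⟩ := step n A B inv hlt'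
        exact ih (n+1) A' B' inv' (by omega)
  -- initial invariant
  set P0 : ℕ → Prop := fun bb => ∃ aa, EdgeOf G' (aa, bb) ∧ Reach G' e1 (aa, bb) ∧
    aa < x ∧ x < bb with hP0
  have hP0e : P0 e1.2 := ⟨e1.1, he1, Relation.ReflTransGen.refl, he1x.1, he1x.2⟩
  have he1k : e1.2 ≤ k := (hedge e1 he1).2.2
  set b0 := Nat.findGreatest P0 k with hb0
  have hPb0 : P0 b0 := Nat.findGreatest_spec he1k hP0e
  obtain ⟨a0, ha0e, ha0r, ha01, ha02⟩ := hPb0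
  have inv0 : GreedyInv G' e1 x y 0 (fun _ => a0) (fun _ => b0) := by
    refine ⟨?_, ?_, ?_, ?_, ?_, ?_, ?_, ?_, ?_⟩
    · intro i _; exact ha0e
    · intro i _; exact ha0r
    · exact ⟨ha01, ha02⟩
    · intro i hi; omega
    · intro h; omega
    · intro i hi; omega
    · simpa using hxy
    · intro g hg hgr h1 h2
      rw [if_pos rfl] at h1 h2
      by_contra hcon
      push_neg at hcon
      have hgk : g.2 ≤ k := (hedge g hg).2.2
      exact Nat.findGreatest_is_greatest hcon hgk ⟨g.1, hg, hgr, h1, h2⟩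
    · rw [if_pos rfl]
      exact ⟨ha01, ha02⟩
  exact main (k - b0) 0 _ _ inv0 (le_refl _)

lemma chain_reach {G : SimpleGraph ℕ} {p : ℕ} {a b : ℕ → ℕ} (hc : CChain G p a b) :
    ∀ i, i < p → Reach G (a 0, b 0) (a i, b i) := by
  intro i
  induction i with
  | zero => intro _; exact Relation.ReflTransGen.refl
  | succ j ih =>
    intro hi
    exact (ih (by omega)).tail ⟨hc.2 j hi, (hc.1 (j+1) hi).1, (hc.1 (j+1) hi).2⟩

lemma approx_mono {G : SimpleGraph ℕ} {k l u v : ℕ} (hkl : k ≤ l)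
    (h : ApproxRel (restrictG G k) u v) : ApproxRel (restrictG G l) u v := by
  rcases approxRel_elim h with rfl | ⟨p, a, b, hp, hc, h1, h2, h3, h4⟩
  · exact approx_refl
  · exact approxRel_of_chain
      ⟨fun i hi => ⟨(hc.1 i hi).1, restrict_mono hkl (hc.1 i hi).2⟩, hc.2⟩ hp h1 h2 h3 h4

lemma edge_split {m k x u v : ℕ} {H : SimpleGraph ℕ} (hH : IsMatchingOn (2*m) H)
    (hxk1 : H.Adj x (k+1)) (h : (restrictG H (k+1)).Adj u v) :
    (restrictG H k).Adj u v ∨ (u = x ∧ v = k+1) ∨ (u = k+1 ∧ v = x) := by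
  rw [adj_restrict] at h
  obtain ⟨hadj, hu, hv⟩ := h
  by_cases hv1 : v = k+1
  · subst hv1
    have := matching_unique hH hxk1.symm hadj.symm
    exact Or.inr (Or.inl ⟨this.symm, rfl⟩)
  by_cases hu1 : u = k+1
  · subst hu1
    have := matching_unique hH hxk1.symm hadj
    exact Or.inr (Or.inr ⟨rfl, this.symm⟩)
  · exact Or.inl (adj_restrict.mpr ⟨hadj, by omega, by omega⟩)

lemma transfer {m k x u w : ℕ} {H : SimpleGraph ℕ} (hH : IsMatchingOn (2*m) H)
    (hxk1 : H.Adj x (k+1)) (hxk : x ≤ k) (hu : u < x) (hne : u ≠ w)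
    (h : ApproxRel (restrictG H (k+1)) u w) :
    ApproxRel (restrictG H k) u w ∨ ApproxRel (restrictG H k) u x := by
  classical
  rcases approxRel_elim h with h' | ⟨p, a, b, hp, hc, h1, h2, h3, h4⟩
  · exact absurd h' hne
  by_cases hall : ∀ i, i < p → (restrictG H k).Adj (a i) (b i)
  · exact Or.inl (approxRel_of_chain
      ⟨fun i hi => ⟨(hc.1 i hi).1, hall i hi⟩, hc.2⟩ hp h1 h2 h3 h4)
  · push_neg at hall
    have hex : ∃ i, i < p ∧ ¬ (restrictG H k).Adj (a i) (b i) := hall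
    set j := Nat.find hex with hj
    obtain ⟨hjp, hjadj⟩ := Nat.find_spec hex
    have hmin : ∀ i, i < j → (restrictG H k).Adj (a i) (b i) := by
      intro i hij
      by_contra hno
      exact Nat.find_min hex hij ⟨by omega, hno⟩
    -- edge j must be (x, k+1)
    have hsplit := edge_split hH hxk1 (hc.1 j hjp).2
    have haj : a j = x ∧ b j = k+1 := by
      rcases hsplit with h' | ⟨h5, h6⟩ | ⟨h5, h6⟩
      · exact absurd h' hjadj
      · exact ⟨h5, h6⟩
      · have := (hc.1 j hjp).1
        omega
    have hj0 : j ≠ 0 := by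
      intro h0
      rw [h0] at haj
      omega
    have hpre : CChain (restrictG H k) j a b :=
      ⟨fun i hi => ⟨(hc.1 i (by omega)).1, hmin i hi⟩, fun i hi => hc.2 i (by omega)⟩
    have hcr := hc.2 (j-1) (by omega)
    rw [show j - 1 + 1 = j by omega, haj.1, haj.2] at hcr
    have hbk : b (j-1) ≤ k := by
      have := (hmin (j-1) (by omega))
      rw [adj_restrict] at this
      exact this.2.2
    have hcov : a (j-1) < x ∧ x < b (j-1) := by
      rcases hcr with ⟨u1, u2, u3⟩ | ⟨u1, u2, u3⟩ <;> omega
    exact Or.inr (approxRel_of_chain hpre (by omega) h1 h2 hcov.1 hcov.2)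

/-- if `H` is a matching on `[2m]` with base `w` avoiding every `C_p` (`p ≥ 3`),
`k < 2m`, `w_{k+1} = 1`, and `x` is joined to `k+1` in `H'' = H[k+1]`, then `x` is the
maximum of its `≈`-block in `H' = H[k]`; the `≈`-blocks of stubs `y < x` outside the
`≈`-block of `x` in `H'` are unchanged; and all the other stubs of `H''` form a single
`≈`-block of `H''`. -/
theorem stmt12 (m k : ℕ) (hm : 0 < m) (w : ℕ → Bool) (hw : IsDyckWord (2*m) w)
    (hk : k < 2*m) (hwk : w (k+1) = true)
    (H : SimpleGraph ℕ) (hH : IsMatchingOn (2*m) H) (hbase : HasBase (2*m) H w)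
    (havoid : ∀ p : ℕ, 3 ≤ p → ¬ ContainsPat H (Ck p))
    (x : ℕ) (hx : (restrictG H (k+1)).Adj x (k+1)) :
    (IsStubOn k (restrictG H k) x ∧
      ∀ y : ℕ, IsStubOn k (restrictG H k) y → ApproxRel (restrictG H k) x y → y ≤ x) ∧
    (∀ y : ℕ, IsStubOn (k+1) (restrictG H (k+1)) y → y < x →
      ¬ (IsStubOn k (restrictG H k) y ∧ ApproxRel (restrictG H k) x y) →
      {z : ℕ | IsStubOn (k+1) (restrictG H (k+1)) z ∧ ApproxRel (restrictG H (k+1)) y z} =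
      {z : ℕ | IsStubOn k (restrictG H k) z ∧ ApproxRel (restrictG H k) y z}) ∧
    (∀ z : ℕ, IsStubOn (k+1) (restrictG H (k+1)) z →
      ¬ (z < x ∧ ¬ (IsStubOn k (restrictG H k) z ∧ ApproxRel (restrictG H k) x z)) →
      {z' : ℕ | IsStubOn (k+1) (restrictG H (k+1)) z' ∧ ApproxRel (restrictG H (k+1)) z z'} =
      {z' : ℕ | IsStubOn (k+1) (restrictG H (k+1)) z' ∧
        ¬ (z' < x ∧ ¬ (IsStubOn k (restrictG H k) z' ∧ ApproxRel (restrictG H k) x z'))}) := by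
  have hkm : k + 1 ≤ 2*m := by omega
  have hx' := adj_restrict.mp hx
  have hxk1 : H.Adj x (k+1) := hx'.1
  have hxne : x ≠ k+1 := hx.ne
  have hxle : x ≤ k := by have := hx'.2.1; omega
  have hx1 : 1 ≤ x := (hH.1 _ _ hxk1).1
  have hsub' : ∀ a b, (restrictG H k).Adj a b → H.Adj a b :=
    fun a b h => (adj_restrict.mp h).1
  have hsub'' : ∀ a b, (restrictG H (k+1)).Adj a b → H.Adj a b :=
    fun a b h => (adj_restrict.mp h).1
  have hxstub : ∀ u, ¬ (restrictG H k).Adj x u := by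
    intro u hu
    rw [adj_restrict] at hu
    have := matching_unique hH hxk1 hu.1
    omega
  have hstubx : IsStubOn k (restrictG H k) x := ⟨hx1, hxle, hxstub⟩
  have hstub'' : ∀ v, IsStubOn (k+1) (restrictG H (k+1)) v →
      v ≤ k ∧ v ≠ x ∧ IsStubOn k (restrictG H k) v := by
    intro v hv
    obtain ⟨h1, h2, h3⟩ := hv
    have hvk : v ≠ k+1 := by
      intro h
      exact h3 x (by rw [h]; exact hx.symm)
    have hvx : v ≠ x := by
      intro h
      exact h3 (k+1) (by rw [h]; exact hx)
    exact ⟨by omega, hvx, ⟨h1, by omega, fun u hu => h3 u (restrict_mono (by omega) hu)⟩⟩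
  have hstub'up : ∀ v, IsStubOn k (restrictG H k) v → v ≠ x →
      IsStubOn (k+1) (restrictG H (k+1)) v := by
    intro v hv hne
    obtain ⟨h1, h2, h3⟩ := hv
    refine ⟨h1, by omega, ?_⟩
    intro u hu
    rcases edge_split hH hxk1 hu with h | ⟨h4, h5⟩ | ⟨h4, h5⟩
    · exact h3 u h
    · exact hne h4
    · omega
  have hpartner : ∀ v, IsStubOn k (restrictG H k) v → v ≠ x →
      ∃ zv, H.Adj v zv ∧ k+1 < zv := by
    intro v hv hne
    obtain ⟨h1, h2, h3⟩ := hv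
    obtain ⟨zv, hzv, -⟩ := hH.2 v h1 (by omega)
    have hb := hH.1 _ _ hzv
    have hzk : ¬ zv ≤ k := by
      intro hle
      exact h3 zv (adj_restrict.mpr ⟨hzv, h2, hle⟩)
    have hzne : zv ≠ k+1 := by
      intro h
      rw [h] at hzv
      have := matching_unique hH hxk1.symm hzv.symm
      omega
    exact ⟨zv, hzv, by omega⟩
  have claimA : ∀ y, IsStubOn k (restrictG H k) y →
      ApproxRel (restrictG H k) x y → y ≤ x := by
    intro y hy happ
    by_contra hgt
    push_neg at hgt
    rcases approxRel_elim happ with h' | ⟨p, a, b, hp, hc, h1, h2, h3, h4⟩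
    · omega
    obtain ⟨zy, hyz, hzy⟩ := hpartner y hy (by omega)
    have hE : ∀ i, i < p → EdgeOf (restrictG H k) (a i, b i) :=
      fun i hi => ⟨(hc.1 i hi).1, (hc.1 i hi).2⟩
    exact greedy_false hH havoid hxk1 hgt hxstub hyz hzy (hE 0 (by omega)) ⟨h1, h2⟩
      (chain_reach hc (p-1) (by omega)) ⟨h3, h4⟩
  have bridge : ∀ v, ApproxRel (restrictG H k) x v → v ≠ x → ∀ zz, x < zz → zz ≤ k →
      ApproxRel (restrictG H (k+1)) zz x := by
    intro v happ hne zz hz1 hz2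
    rcases approxRel_elim happ with h' | ⟨q, c, d, hq, hc, h1, h2, h3, h4⟩
    · exact absurd h'.symm hne
    have hd0 : d 0 ≤ k := by
      have := (hc.1 0 (by omega)).2
      rw [adj_restrict] at this
      exact this.2.2
    have hch : CChain (restrictG H (k+1)) 2
        (fun i => match i with | 0 => x | _+1 => c 0)
        (fun i => match i with | 0 => k+1 | _+1 => d 0) := by
      constructor
      · intro i hi
        match i, hi with
        | 0, _ => exact ⟨show x < k+1 by omega, hx⟩
        | 1, _ => exact ⟨h1.trans h2, restrict_mono (by omega) (hc.1 0 (by omega)).2⟩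
      · intro i hi
        match i, hi with
        | 0, _ => exact Or.inr ⟨h1, h2, show d 0 < k+1 by omega⟩
    refine approxRel_of_chain hch (by omega) ?_ ?_ ?_ ?_
    · exact hz1
    · show zz < k+1
      omega
    · show c 0 < x
      exact h1
    · show x < d 0
      exact h2
  have partB : ∀ y : ℕ, IsStubOn (k+1) (restrictG H (k+1)) y → y < x →
      ¬ (IsStubOn k (restrictG H k) y ∧ ApproxRel (restrictG H k) x y) →
      {z : ℕ | IsStubOn (k+1) (restrictG H (k+1)) z ∧ ApproxRel (restrictG H (k+1)) y z} =
      {z : ℕ | IsStubOn k (restrictG H k) z ∧ ApproxRel (restrictG H k) y z} := by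
    intro y hy hyx hblock
    obtain ⟨hyk, hynex, hy'⟩ := hstub'' y hy
    have hnapp : ¬ ApproxRel (restrictG H k) x y := fun h => hblock ⟨hy', h⟩
    ext v
    simp only [Set.mem_setOf_eq]
    constructor
    · rintro ⟨hv, happ⟩
      obtain ⟨hvk, hvnex, hv'⟩ := hstub'' v hv
      by_cases hne : y = v
      · exact ⟨hv', hne ▸ approx_refl⟩
      rcases transfer hH hxk1 hxle hyx hne happ with h | h
      · exact ⟨hv', h⟩
      · exact absurd (approx_symm h) hnapp
    · rintro ⟨hv, happ⟩
      have hvnex : v ≠ x := by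
        intro h
        exact hnapp (approx_symm (h ▸ happ))
      exact ⟨hstub'up v hv hvnex, approx_mono (by omega) happ⟩
  have hOther : ∀ v, IsStubOn (k+1) (restrictG H (k+1)) v →
      ((¬ (v < x ∧ ¬ (IsStubOn k (restrictG H k) v ∧ ApproxRel (restrictG H k) x v))) ↔
        (x < v ∨ ApproxRel (restrictG H k) x v)) := by
    intro v hv
    obtain ⟨hvk, hvnex, hv'⟩ := hstub'' v hv
    constructor
    · intro h
      by_cases hlt : v < x
      · push_neg at h
        exact Or.inr (h hlt).2
      · exact Or.inl (by omega)
    · rintro (h | h) ⟨h1, h2⟩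
      · omega
      · exact h2 ⟨hv', h⟩
  have partC : ∀ zc, IsStubOn (k+1) (restrictG H (k+1)) zc →
      (x < zc ∨ ApproxRel (restrictG H k) x zc) →
      ∀ v, IsStubOn (k+1) (restrictG H (k+1)) v →
      (ApproxRel (restrictG H (k+1)) zc v ↔ (x < v ∨ ApproxRel (restrictG H k) x v)) := by
    intro zc hzc hother v hv
    obtain ⟨hzck, hzcnex, hzc'⟩ := hstub'' zc hzc
    obtain ⟨hvk, hvnex, hv'⟩ := hstub'' v hv
    constructor
    · intro happ
      by_cases hne : zc = v
      · subst hne; exact hother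
      by_cases hlt : x < v
      · exact Or.inl hlt
      have hvx : v < x := by omega
      rcases transfer hH hxk1 hxle hvx (fun h => hne h.symm) (approx_symm happ) with h | h
      · rcases hother with hz | hz
        · right
          rcases approxRel_elim h with h' | ⟨p, a, b, hp, hc, h1, h2, h3, h4⟩
          · omega
          obtain ⟨i, hip, hi1, hi2⟩ := chain_interval p a b x hc hp (by omega) (by omega)
          have hcpre : CChain (restrictG H k) (i+1) a b :=
            ⟨fun t ht => hc.1 t (by omega), fun t ht => hc.2 t (by omega)⟩
          have hrev := chain_reverse hcpre
          refine approxRel_of_chain hrev (by omega) ?_ ?_ ?_ ?_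
          · show a (i+1-1-0) < x
            rw [show i+1-1-0 = i by omega]; exact hi1
          · show x < b (i+1-1-0)
            rw [show i+1-1-0 = i by omega]; exact hi2
          · show a (i+1-1-(i+1-1)) < v
            rw [show i+1-1-(i+1-1) = 0 by omega]; exact h1
          · show v < b (i+1-1-(i+1-1))
            rw [show i+1-1-(i+1-1) = 0 by omega]; exact h2
        · exact Or.inr (approx_trans hH hsub' hz (approx_symm h))
      · exact Or.inr (approx_symm h)
    · intro hvother
      rcases hother with hz | hz
      · rcases hvother with hv2 | hv2
        · by_cases hne : zc = v
          · exact hne ▸ approx_refl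
          · refine approxRel_of_chain (chain_single (show x < k+1 by omega) hx)
              (by omega) ?_ ?_ ?_ ?_
            · show x < zc; exact hz
            · show zc < k+1; omega
            · show x < v; exact hv2
            · show v < k+1; omega
        · exact approx_trans hH hsub'' (bridge v hv2 hvnex zc hz hzck)
            (approx_mono (by omega) hv2)
      · rcases hvother with hv2 | hv2
        · exact approx_trans hH hsub'' (approx_symm (approx_mono (by omega) hz))
            (approx_symm (bridge zc hz hzcnex v hv2 hvk))
        · exact approx_trans hH hsub'' (approx_symm (approx_mono (by omega) hz))
            (approx_mono (by omega) hv2)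
  refine ⟨⟨hstubx, claimA⟩, partB, ?_⟩
  intro zc hzc hcond
  have hother := (hOther zc hzc).mp hcond
  ext v
  simp only [Set.mem_setOf_eq]
  constructor
  · rintro ⟨hv, happ⟩
    exact ⟨hv, (hOther v hv).mpr ((partC zc hzc hother v hv).mp happ)⟩
  · rintro ⟨hv, hc2⟩
    exact ⟨hv, (partC zc hzc hother v hv).mpr ((hOther v hv).mp hc2)⟩
end trans
end

section
/- Let M be a matching on [2m] with base w, let x_1 < x_2 < ... < x_m be its l-vertices (so x_1 = 1), let y_1 < y_2 < ... < y_m be its r-vertices, and let y_k be the vertex joined to the vertex 1. Call an edge {x_i, y_j} of M other than {1, y_k} short if y_j < y_k and long if y_j > y_k, and call an l-vertex short (respectively long) if it is incident with a short (respectively long) edge. Then M avoids M_231 if and only if the following three conditions hold: the subgraph of M induced by the endpoints of the short edges avoids M_231; the subgraph of M induced by the endpoints of the long edges avoids M_231; and every short l-vertex is smaller than every long l-vertex. -/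
lemma m231_adj_cases {u v : ℕ} (h : M231.Adj u v) :
    (u=1∧v=5)∨(u=5∧v=1)∨(u=2∧v=6)∨(u=6∧v=2)∨(u=3∧v=4)∨(u=4∧v=3) := by
  simp only [M231, SimpleGraph.fromRel_adj, List.mem_cons, List.not_mem_nil, or_false,
    Prod.mk.injEq] at h
  tauto

lemma m231_adj_15 : M231.Adj 1 5 := by
  simp [M231, SimpleGraph.fromRel_adj]
lemma m231_adj_26 : M231.Adj 2 6 := by
  simp [M231, SimpleGraph.fromRel_adj]
lemma m231_adj_34 : M231.Adj 3 4 := by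
  simp [M231, SimpleGraph.fromRel_adj]

lemma contains231 (G : SimpleGraph ℕ) (f : ℕ → ℕ) (hf : StrictMono f)
    (h15 : G.Adj (f 1) (f 5)) (h26 : G.Adj (f 2) (f 6)) (h34 : G.Adj (f 3) (f 4)) :
    ContainsPat G M231 := by
  refine ⟨f, hf, fun u v h => ?_⟩
  rcases m231_adj_cases h with ⟨hu,hv⟩|⟨hu,hv⟩|⟨hu,hv⟩|⟨hu,hv⟩|⟨hu,hv⟩|⟨hu,hv⟩ <;>
    subst hu <;> subst hv
  · exact h15
  · exact h15.symm
  · exact h26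
  · exact h26.symm
  · exact h34
  · exact h34.symm

/-- let `M` be a matching on `[2m]` with base `w`, and let `r` be the vertex
joined to the vertex `1`.  Then `M` avoids `M_231` iff the subgraph of short edges
(r-endpoint below `r`) avoids `M_231`, the subgraph of long edges (r-endpoint above `r`)
avoids `M_231`, and every short l-vertex is smaller than every long l-vertex. -/
theorem stmt14 (m : ℕ) (hm : 0 < m) (w : ℕ → Bool)
    (M : SimpleGraph ℕ) (hM : IsMatchingOn (2*m) M) (hbase : HasBase (2*m) M w)
    (r : ℕ) (hr : M.Adj 1 r) :
    ¬ ContainsPat M M231 ↔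
      ((¬ ContainsPat (SimpleGraph.fromRel fun u v => M.Adj u v ∧ u < v ∧ v < r) M231) ∧
       (¬ ContainsPat (SimpleGraph.fromRel fun u v => M.Adj u v ∧ u < v ∧ r < v) M231) ∧
       (∀ a b a' b' : ℕ, M.Adj a b → a < b → b < r →
          M.Adj a' b' → a' < b' → r < b' → a < a')) := by
  obtain ⟨hbnd, huniq⟩ := hM
  have hrb := hbnd 1 r hr
  have hr1 : 1 < r := lt_of_le_of_ne hrb.2.2.1 (fun h => M.irrefl (h ▸ hr))
  -- unique neighbour facts
  have hnbr_r : ∀ x : ℕ, M.Adj x r → x = 1 := by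
    intro x hx
    exact (huniq r hrb.2.2.1 hrb.2.2.2).unique hx.symm hr.symm
  have hnbr_1 : ∀ y : ℕ, M.Adj 1 y → y = r := by
    intro y hy
    exact (huniq 1 le_rfl (by omega)).unique hy hr
  constructor
  · intro h
    refine ⟨?_, ?_, ?_⟩
    · rintro ⟨f, hf, hadj⟩
      refine h ⟨f, hf, fun u v huv => ?_⟩
      have h' := hadj u v huv
      rw [SimpleGraph.fromRel_adj] at h'
      rcases h'.2 with ⟨hMa, _, _⟩ | ⟨hMa, _, _⟩
      · exact hMa
      · exact hMa.symm
    · rintro ⟨f, hf, hadj⟩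
      refine h ⟨f, hf, fun u v huv => ?_⟩
      have h' := hadj u v huv
      rw [SimpleGraph.fromRel_adj] at h'
      rcases h'.2 with ⟨hMa, _, _⟩ | ⟨hMa, _, _⟩
      · exact hMa
      · exact hMa.symm
    · intro a b a' b' hab h1 h2 hab' h3 h4
      by_contra hlt
      -- a' ≤ a, show a' < a
      have ha1 : 1 ≤ a := (hbnd a b hab).1
      have ha'1 : 1 ≤ a' := (hbnd a' b' hab').1
      have hne : a' ≠ a := by
        intro he
        subst he
        have := (huniq a' ha'1 (hbnd a' b' hab').2.1).unique hab' hab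
        omega
      have haa : a' < a := by omega
      have ha'ne1 : a' ≠ 1 := by
        intro he
        subst he
        have := hnbr_1 b' hab'
        omega
      -- build the pattern 1 < a' < a < b < r < b'
      set f : ℕ → ℕ := fun n => match n with
        | 0 => 0 | 1 => 1 | 2 => a' | 3 => a | 4 => b | 5 => r | (n+6) => b' + n
        with hfdef
      have hf : StrictMono f := by
        apply strictMono_nat_of_lt_succ
        intro n
        match n with
        | 0 => show 0 < 1; omega
        | 1 => show 1 < a'; omega
        | 2 => show a' < a; omega
        | 3 => show a < b; omega
        | 4 => show b < r; omega
        | 5 => show r < b' + 0; omega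
        | (k+6) => show b' + k < b' + (k+1); omega
      refine h (contains231 M f hf ?_ ?_ ?_)
      · show M.Adj 1 r; exact hr
      · show M.Adj a' (b' + 0); simpa using hab'
      · show M.Adj a b; exact hab
  · rintro ⟨h1, h2, h3⟩ ⟨f, hf, hadj⟩
    have hA := hadj 1 5 m231_adj_15
    have hB := hadj 2 6 m231_adj_26
    have hC := hadj 3 4 m231_adj_34
    have o12 : f 1 < f 2 := hf (by norm_num)
    have o23 : f 2 < f 3 := hf (by norm_num)
    have o34 : f 3 < f 4 := hf (by norm_num)
    have o45 : f 4 < f 5 := hf (by norm_num)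
    have o56 : f 5 < f 6 := hf (by norm_num)
    have hf1 : 1 ≤ f 1 := (hbnd _ _ hA).1
    have mkS : ∀ u v : ℕ, M.Adj u v → u < v → v < r →
        (SimpleGraph.fromRel fun u v => M.Adj u v ∧ u < v ∧ v < r).Adj u v := by
      intro u v h hl hr'
      rw [SimpleGraph.fromRel_adj]
      exact ⟨hl.ne, Or.inl ⟨h, hl, hr'⟩⟩
    have mkL : ∀ u v : ℕ, M.Adj u v → u < v → r < v →
        (SimpleGraph.fromRel fun u v => M.Adj u v ∧ u < v ∧ r < v).Adj u v := by
      intro u v h hl hr'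
      rw [SimpleGraph.fromRel_adj]
      exact ⟨hl.ne, Or.inl ⟨h, hl, hr'⟩⟩
    rcases lt_trichotomy (f 4) r with h4 | h4 | h4
    · rcases lt_trichotomy (f 5) r with h5 | h5 | h5
      · rcases lt_trichotomy (f 6) r with h6 | h6 | h6
        · exact h1 (contains231 _ f hf (mkS _ _ hA (by omega) h5)
            (mkS _ _ hB (by omega) h6) (mkS _ _ hC o34 h4))
        · have := hnbr_r (f 2) (h6 ▸ hB)
          omega
        · have := h3 (f 3) (f 4) (f 2) (f 6) hC o34 h4 hB (by omega) h6
          omega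
      · have hf11 : f 1 = 1 := hnbr_r (f 1) (h5 ▸ hA)
        have := h3 (f 3) (f 4) (f 2) (f 6) hC o34 h4 hB (by omega) (by omega)
        omega
      · have := h3 (f 3) (f 4) (f 1) (f 5) hC o34 h4 hA (by omega) h5
        omega
    · have := hnbr_r (f 3) (h4 ▸ hC)
      omega
    · exact h2 (contains231 _ f hf (mkL _ _ hA (by omega) (by omega))
        (mkL _ _ hB (by omega) (by omega)) (mkL _ _ hC o34 h4))
end

section
/- Let w and p be Dyck words of length 2m such that p does not exceed w. If the i-th up-step of p is partnered with the j-th down-step of p, then the position of the i-th letter 0 in w is smaller than the position of the j-th letter 1 in w. Consequently, M(w,p) — the graph on [2m] joining the position of the i-th 0 of w to the position of the j-th 1 of w whenever the i-th up-step of p is partnered with the j-th down-step of p — is a well-defined matching on [2m] with base w. -/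
/-- `h_w(t)`: the number of `0`s minus the number of `1`s among the first `t` letters of `w`. -/
def heightAt (w : ℕ → Bool) (t : ℕ) : ℤ :=
  (((Finset.Icc 1 t).filter fun i => w i = false).card : ℤ) -
  (((Finset.Icc 1 t).filter fun i => w i = true).card : ℤ)

/-- The Dyck word `p` does not exceed the Dyck word `w` (both of length `n`). -/
def DoesNotExceed (n : ℕ) (p w : ℕ → Bool) : Prop :=
  ∀ t : ℕ, t ≤ n → heightAt p t ≤ heightAt w t

/-- `a` is the position of the `i`-th letter `0` of `w`. -/
def IsNthZero (w : ℕ → Bool) (i a : ℕ) : Prop :=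
  1 ≤ a ∧ w a = false ∧ ((Finset.Icc 1 a).filter fun j => w j = false).card = i

/-- `b` is the position of the `j`-th letter `1` of `w`. -/
def IsNthOne (w : ℕ → Bool) (j b : ℕ) : Prop :=
  1 ≤ b ∧ w b = true ∧ ((Finset.Icc 1 b).filter fun t => w t = true).card = j

/-- The up-step at position `a` is partnered with the down-step at position `b` in `p`. -/
def Partnered (p : ℕ → Bool) (a b : ℕ) : Prop :=
  a < b ∧ heightAt p b = heightAt p (a - 1) ∧
  ∀ t : ℕ, a ≤ t → t < b → heightAt p (a - 1) < heightAt p t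

/-- The graph `M(w,p)` on `[n]`: the position of the `i`-th `0` of `w` is joined to the
position of the `j`-th `1` of `w` whenever the `i`-th up-step of `p` is partnered with
the `j`-th down-step of `p`. -/
def Mwp (n : ℕ) (w p : ℕ → Bool) : SimpleGraph ℕ :=
  SimpleGraph.fromRel fun u v => ∃ i j a b : ℕ,
    a ≤ n ∧ b ≤ n ∧ u ≤ n ∧ v ≤ n ∧
    IsNthZero p i a ∧ IsNthOne p j b ∧ Partnered p a b ∧
    IsNthZero w i u ∧ IsNthOne w j v

namespace Stmt15Aux

def cnt (w : ℕ → Bool) (c : Bool) (t : ℕ) : ℕ :=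
  ((Finset.Icc 1 t).filter fun i => w i = c).card

lemma cnt_zero (w : ℕ → Bool) (c : Bool) : cnt w c 0 = 0 := by simp [cnt]

lemma cnt_succ (w : ℕ → Bool) (c : Bool) (t : ℕ) :
    cnt w c (t+1) = cnt w c t + if w (t+1) = c then 1 else 0 := by
  unfold cnt
  rw [← Finset.insert_Icc_right_eq_Icc_add_one (by omega : 1 ≤ t+1), Finset.filter_insert]
  split
  · rw [Finset.card_insert_of_notMem (by simp)]
  · simp

lemma cnt_mono (w : ℕ → Bool) (c : Bool) {s t : ℕ} (h : s ≤ t) :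
    cnt w c s ≤ cnt w c t :=
  Finset.card_le_card (Finset.filter_subset_filter _ (Finset.Icc_subset_Icc_right h))

lemma cnt_add (w : ℕ → Bool) (t : ℕ) : cnt w false t + cnt w true t = t := by
  induction t with
  | zero => simp [cnt_zero]
  | succ n ih =>
    rw [cnt_succ, cnt_succ]
    cases h : w (n+1) <;> simp [h] <;> omega

lemma height_eq (w : ℕ → Bool) (t : ℕ) :
    heightAt w t = (t : ℤ) - 2 * cnt w true t := by
  have h := cnt_add w t
  show (cnt w false t : ℤ) - cnt w true t = _
  omega

lemma height_eq' (w : ℕ → Bool) (t : ℕ) :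
    heightAt w t = 2 * (cnt w false t : ℤ) - t := by
  have h := cnt_add w t
  show (cnt w false t : ℤ) - cnt w true t = _
  omega

lemma height_zero (w : ℕ → Bool) : heightAt w 0 = 0 := by simp [heightAt]

lemma height_succ (w : ℕ → Bool) (t : ℕ) :
    heightAt w (t+1) = heightAt w t + (if w (t+1) = true then (-1:ℤ) else 1) := by
  have h1 := cnt_succ w false t
  have h2 := cnt_succ w true t
  show (cnt w false (t+1) : ℤ) - cnt w true (t+1) =
    ((cnt w false t : ℤ) - cnt w true t) + _
  cases h : w (t+1) <;> simp [h] at h1 h2 ⊢ <;> omega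

lemma dyck_nonneg {n : ℕ} {w : ℕ → Bool} (h : IsDyckWord n w) {t : ℕ} (ht : t ≤ n) :
    0 ≤ heightAt w t := by
  have h2 : 2 * cnt w true t ≤ t := h.2 t ht
  rw [height_eq]; omega

lemma dyck_final {n : ℕ} {w : ℕ → Bool} (h : IsDyckWord n w) : heightAt w n = 0 := by
  have h1 : 2 * cnt w true n = n := h.1
  rw [height_eq]; omega

lemma dyck_counts {m : ℕ} {w : ℕ → Bool} (h : IsDyckWord (2*m) w) :
    cnt w true (2*m) = m ∧ cnt w false (2*m) = m := by
  have h1 : 2 * cnt w true (2*m) = 2*m := h.1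
  have h2 := cnt_add w (2*m)
  omega

lemma cnt_true_le {n : ℕ} {p w : ℕ → Bool} (hle : DoesNotExceed n p w) {t : ℕ}
    (ht : t ≤ n) : cnt w true t ≤ cnt p true t := by
  have h := hle t ht
  rw [height_eq, height_eq] at h; omega

lemma cnt_false_le {n : ℕ} {p w : ℕ → Bool} (hle : DoesNotExceed n p w) {t : ℕ}
    (ht : t ≤ n) : cnt p false t ≤ cnt w false t := by
  have h := hle t ht
  rw [height_eq', height_eq'] at h; omega

lemma cnt_lt {w : ℕ → Bool} {c : Bool} {a a' : ℕ} (h : a < a') (hc : w a' = c) :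
    cnt w c a < cnt w c a' := by
  obtain ⟨b, rfl⟩ : ∃ b, a' = b+1 := ⟨a'-1, by omega⟩
  have hs := cnt_succ w c b
  have hm := cnt_mono w c (show a ≤ b by omega)
  rw [if_pos hc] at hs; omega

lemma nth_unique {w : ℕ → Bool} {c : Bool} {a a' i : ℕ}
    (h1 : w a = c) (h2 : cnt w c a = i) (h3 : w a' = c) (h4 : cnt w c a' = i) :
    a = a' := by
  rcases lt_trichotomy a a' with h | h | h
  · have := cnt_lt h h3; omega
  · exact h
  · have := cnt_lt h h1; omega

lemma exists_nth (w : ℕ → Bool) (c : Bool) {i n : ℕ} (hi : 1 ≤ i)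
    (hn : i ≤ cnt w c n) : ∃ a, a ≤ n ∧ 1 ≤ a ∧ w a = c ∧ cnt w c a = i := by
  classical
  have hex : ∃ t, i ≤ cnt w c t := ⟨n, hn⟩
  have ha : i ≤ cnt w c (Nat.find hex) := Nat.find_spec hex
  have han : Nat.find hex ≤ n := Nat.find_min' hex hn
  have ha0 : Nat.find hex ≠ 0 := by
    intro h; rw [h, cnt_zero] at ha; omega
  obtain ⟨b, hb⟩ := Nat.exists_eq_succ_of_ne_zero ha0
  have hlt : ¬ i ≤ cnt w c b := Nat.find_min hex (by omega)
  rw [hb, Nat.succ_eq_add_one] at ha han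
  have hs := cnt_succ w c b
  refine ⟨b+1, han, by omega, ?_, ?_⟩
  · by_contra hcne
    rw [if_neg hcne] at hs; omega
  · split at hs <;> omega

lemma height_up {p : ℕ → Bool} {a : ℕ} (ha : 1 ≤ a) (hpa : p a = false) :
    heightAt p a = heightAt p (a-1) + 1 := by
  have h := height_succ p (a-1)
  rw [show a-1+1 = a by omega, hpa] at h
  simpa using h

lemma height_down {p : ℕ → Bool} {b : ℕ} (hb : 1 ≤ b) (hpb : p b = true) :
    heightAt p b = heightAt p (b-1) - 1 := by
  have h := height_succ p (b-1)
  rw [show b-1+1 = b by omega, hpb] at h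
  simp at h; omega

lemma height_step_cases (p : ℕ → Bool) {b : ℕ} (hb : 1 ≤ b) :
    heightAt p b = heightAt p (b-1) + 1 ∨ heightAt p b = heightAt p (b-1) - 1 := by
  have h := height_succ p (b-1)
  rw [show b-1+1 = b by omega] at h
  split at h
  · right; omega
  · left; omega

lemma partner_exists {n : ℕ} {p : ℕ → Bool} (hp : IsDyckWord n p) {a : ℕ}
    (ha1 : 1 ≤ a) (han : a ≤ n) (hpa : p a = false) :
    ∃ b, b ≤ n ∧ Partnered p a b ∧ p b = true := by
  classical
  have hfin : heightAt p n = 0 := dyck_final hp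
  have h0 : 0 ≤ heightAt p (a-1) := dyck_nonneg hp (by omega)
  have hex : ∃ t, a ≤ t ∧ heightAt p t ≤ heightAt p (a-1) := ⟨n, han, by omega⟩
  obtain ⟨hab, hhb⟩ := Nat.find_spec hex
  set b := Nat.find hex with hbdef
  have hbn : b ≤ n := Nat.find_min' hex ⟨han, by omega⟩
  have hup : heightAt p a = heightAt p (a-1) + 1 := height_up ha1 hpa
  have hne : a ≠ b := by
    intro h; rw [← h] at hhb; omega
  have halt : a < b := lt_of_le_of_ne hab hne
  have hmin : ∀ t, a ≤ t → t < b → heightAt p (a-1) < heightAt p t := by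
    intro t h1 h2
    have := Nat.find_min hex h2
    push_neg at this
    exact this h1
  have hb1 : heightAt p (a-1) < heightAt p (b-1) := hmin (b-1) (by omega) (by omega)
  have hcases := height_step_cases p (show 1 ≤ b by omega)
  have heq : heightAt p b = heightAt p (a-1) := by omega
  have hpb : p b = true := by
    by_contra hc
    have : p b = false := by simpa using hc
    have := height_up (show 1 ≤ b by omega) this
    omega
  exact ⟨b, hbn, ⟨halt, heq, hmin⟩, hpb⟩

lemma partner_exists_rev {n : ℕ} {p : ℕ → Bool} (hp : IsDyckWord n p) {b : ℕ}
    (hb1 : 1 ≤ b) (hbn : b ≤ n) (hpb : p b = true) :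
    ∃ a, 1 ≤ a ∧ Partnered p a b ∧ p a = false := by
  classical
  have h0 : 0 ≤ heightAt p b := dyck_nonneg hp hbn
  have hdown : heightAt p b = heightAt p (b-1) - 1 := height_down hb1 hpb
  have hb2 : 2 ≤ b := by
    by_contra hc
    have : b = 1 := by omega
    rw [this] at hdown
    simp [height_zero] at hdown
    rw [this] at h0
    omega
  have hP0 : heightAt p 0 ≤ heightAt p b := by rw [height_zero]; exact h0
  set s := Nat.findGreatest (fun s => heightAt p s ≤ heightAt p b) (b-1) with hsdef
  have hPs : heightAt p s ≤ heightAt p b :=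
    Nat.findGreatest_spec (P := fun s => heightAt p s ≤ heightAt p b)
      (Nat.zero_le _) hP0
  have hsle : s ≤ b - 1 := Nat.findGreatest_le _
  have hgt : ∀ t, s < t → t ≤ b-1 → heightAt p b < heightAt p t := by
    intro t h1 h2
    have := Nat.findGreatest_is_greatest h1 h2
    omega
  have hsne : s ≠ b - 1 := by
    intro h
    rw [h] at hPs
    omega
  have hs1 : s + 1 ≤ b - 1 := by omega
  have hup : heightAt p b < heightAt p (s+1) := hgt (s+1) (by omega) hs1
  have hpa : p (s+1) = false := by
    by_contra hc
    have hc' : p (s+1) = true := by simpa using hc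
    have := height_down (show 1 ≤ s+1 by omega) hc'
    rw [show s+1-1 = s by omega] at this
    omega
  have hstep : heightAt p (s+1) = heightAt p s + 1 := by
    have := height_up (show 1 ≤ s+1 by omega) hpa
    rw [show s+1-1 = s by omega] at this
    exact this
  have hseq : heightAt p s = heightAt p b := by omega
  refine ⟨s+1, by omega, ⟨by omega, ?_, ?_⟩, hpa⟩
  · rw [show s+1-1 = s by omega]; omega
  · intro t h1 h2
    rw [show s+1-1 = s by omega, hseq]
    exact hgt t (by omega) (by omega)

lemma partnered_unique_b {p : ℕ → Bool} {a b b' : ℕ}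
    (h1 : Partnered p a b) (h2 : Partnered p a b') : b = b' := by
  rcases lt_trichotomy b b' with h | h | h
  · have := h2.2.2 b (le_of_lt h1.1) h
    rw [h1.2.1] at this
    exact absurd this (lt_irrefl _)
  · exact h
  · have := h1.2.2 b' (le_of_lt h2.1) h
    rw [h2.2.1] at this
    exact absurd this (lt_irrefl _)

lemma partnered_unique_a {p : ℕ → Bool} {a a' b : ℕ}
    (h1 : Partnered p a b) (h2 : Partnered p a' b) : a = a' := by
  have key : ∀ x y : ℕ, x < y → Partnered p x b → Partnered p y b → False := by
    intro x y hxy hx hy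
    have ht := hx.2.2 (y-1) (by omega) (by have := hy.1; omega)
    have e1 : heightAt p b = heightAt p (x-1) := hx.2.1
    have e2 : heightAt p b = heightAt p (y-1) := hy.2.1
    omega
  rcases lt_trichotomy a a' with h | h | h
  · exact absurd (key a a' h h1 h2) not_false
  · exact h
  · exact absurd (key a' a h h2 h1) not_false



/-- The underlying relation of `Mwp`. -/
def MR (n : ℕ) (w p : ℕ → Bool) (u v : ℕ) : Prop :=
  ∃ i j a b : ℕ,
    a ≤ n ∧ b ≤ n ∧ u ≤ n ∧ v ≤ n ∧
    IsNthZero p i a ∧ IsNthOne p j b ∧ Partnered p a b ∧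
    IsNthZero w i u ∧ IsNthOne w j v

lemma mwp_adj {n : ℕ} {w p : ℕ → Bool} {u v : ℕ} :
    (Mwp n w p).Adj u v ↔ u ≠ v ∧ (MR n w p u v ∨ MR n w p v u) := by
  unfold Mwp MR
  exact SimpleGraph.fromRel_adj _ u v

lemma key_lt {m : ℕ} {w p : ℕ → Bool} (hle : DoesNotExceed (2*m) p w)
    {i j a b a' b' : ℕ} (han : a ≤ 2*m) (hbn : b ≤ 2*m)
    (hia : IsNthZero p i a) (hjb : IsNthOne p j b) (hab : Partnered p a b)
    (hia' : IsNthZero w i a') (hjb' : IsNthOne w j b') : a' < b' := by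
  have hca : cnt p false a = i := hia.2.2
  have hcb : cnt p true b = j := hjb.2.2
  have hca' : cnt w false a' = i := hia'.2.2
  have hcb' : cnt w true b' = j := hjb'.2.2
  have h1 : a' ≤ a := by
    by_contra hc
    have hlt := cnt_lt (show a < a' by omega) hia'.2.1
    have hle2 := cnt_false_le hle han
    omega
  have h2 : b ≤ b' := by
    by_contra hc
    have hlt := cnt_lt (show b' < b by omega) hjb.2.1
    have hle2 := cnt_true_le hle (show b' ≤ 2*m by omega)
    omega
  have := hab.1
  omega

/-- From a `0`-vertex `v` of `w`, construct its partner: a `1`-vertex `u > v`. -/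
lemma MR_exists_of_false {m : ℕ} {w p : ℕ → Bool} (hw : IsDyckWord (2*m) w)
    (hp : IsDyckWord (2*m) p) (hle : DoesNotExceed (2*m) p w)
    {v : ℕ} (hv1 : 1 ≤ v) (hvn : v ≤ 2*m) (hvf : w v = false) :
    ∃ u, v < u ∧ MR (2*m) w p v u := by
  obtain ⟨hwt, hwf⟩ := dyck_counts hw
  obtain ⟨hpt, hpf⟩ := dyck_counts hp
  set i := cnt w false v with hidef
  have hi1 : 1 ≤ i := by
    have := cnt_lt (show 0 < v by omega) hvf
    rw [cnt_zero] at this; omega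
  have him : i ≤ m := by
    have := cnt_mono w false hvn; omega
  obtain ⟨a, han, ha1, hpa, hca⟩ := exists_nth p false (n := 2*m) hi1 (by omega)
  obtain ⟨b, hbn, hpart, hpb⟩ := partner_exists hp ha1 han hpa
  set j := cnt p true b with hjdef
  have hj1 : 1 ≤ j := by
    have := cnt_lt (show 0 < b by have := hpart.1; omega) hpb
    rw [cnt_zero] at this; omega
  have hjm : j ≤ m := by
    have := cnt_mono p true hbn; omega
  obtain ⟨u, hun, hu1, hwu, hcu⟩ := exists_nth w true (n := 2*m) hj1 (by omega)
  have hMR : MR (2*m) w p v u :=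
    ⟨i, j, a, b, han, hbn, hvn, hun, ⟨ha1, hpa, hca⟩, ⟨by have := hpart.1; omega, hpb, rfl⟩,
      hpart, ⟨hv1, hvf, rfl⟩, ⟨hu1, hwu, hcu⟩⟩
  exact ⟨u, key_lt hle han hbn ⟨ha1, hpa, hca⟩ ⟨by have := hpart.1; omega, hpb, rfl⟩
    hpart ⟨hv1, hvf, rfl⟩ ⟨hu1, hwu, hcu⟩, hMR⟩

/-- From a `1`-vertex `v` of `w`, construct its partner: a `0`-vertex `u < v`. -/
lemma MR_exists_of_true {m : ℕ} {w p : ℕ → Bool} (hw : IsDyckWord (2*m) w)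
    (hp : IsDyckWord (2*m) p) (hle : DoesNotExceed (2*m) p w)
    {v : ℕ} (hv1 : 1 ≤ v) (hvn : v ≤ 2*m) (hvt : w v = true) :
    ∃ u, u < v ∧ MR (2*m) w p u v := by
  obtain ⟨hwt, hwf⟩ := dyck_counts hw
  obtain ⟨hpt, hpf⟩ := dyck_counts hp
  set j := cnt w true v with hjdef
  have hj1 : 1 ≤ j := by
    have := cnt_lt (show 0 < v by omega) hvt
    rw [cnt_zero] at this; omega
  have hjm : j ≤ m := by
    have := cnt_mono w true hvn; omega
  obtain ⟨b, hbn, hb1, hpb, hcb⟩ := exists_nth p true (n := 2*m) hj1 (by omega)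
  obtain ⟨a, ha1, hpart, hpa⟩ := partner_exists_rev hp hb1 hbn hpb
  have han : a ≤ 2*m := by have := hpart.1; omega
  set i := cnt p false a with hidef
  have hi1 : 1 ≤ i := by
    have := cnt_lt (show 0 < a by omega) hpa
    rw [cnt_zero] at this; omega
  have him : i ≤ m := by
    have := cnt_mono p false han; omega
  obtain ⟨u, hun, hu1, hwu, hcu⟩ := exists_nth w false (n := 2*m) hi1 (by omega)
  have hMR : MR (2*m) w p u v :=
    ⟨i, j, a, b, han, hbn, hun, hvn, ⟨ha1, hpa, rfl⟩, ⟨hb1, hpb, hcb⟩,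
      hpart, ⟨hu1, hwu, hcu⟩, ⟨hv1, hvt, rfl⟩⟩
  exact ⟨u, key_lt hle han hbn ⟨ha1, hpa, rfl⟩ ⟨hb1, hpb, hcb⟩
    hpart ⟨hu1, hwu, hcu⟩ ⟨hv1, hvt, rfl⟩, hMR⟩

lemma MR_false_true {n : ℕ} {w p : ℕ → Bool} {u v : ℕ} (h : MR n w p u v) :
    w u = false ∧ w v = true ∧ 1 ≤ u ∧ 1 ≤ v ∧ u ≤ n ∧ v ≤ n := by
  obtain ⟨i, j, a, b, _, _, hun, hvn, _, _, _, hu, hv⟩ := h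
  exact ⟨hu.2.1, hv.2.1, hu.1, hv.1, hun, hvn⟩

/-- Uniqueness of the partner of the zero-endpoint. -/
lemma MR_unique_right {n : ℕ} {w p : ℕ → Bool} {v u u' : ℕ}
    (h : MR n w p v u) (h' : MR n w p v u') : u = u' := by
  obtain ⟨i, j, a, b, _, _, _, _, hpa, hpb, hab, hv, hu⟩ := h
  obtain ⟨i', j', a', b', _, _, _, _, hpa', hpb', hab', hv', hu'⟩ := h'
  have hi : i = i' := by
    have e1 : cnt w false v = i := hv.2.2
    have e2 : cnt w false v = i' := hv'.2.2
    omega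
  subst hi
  have ha : a = a' := nth_unique hpa.2.1 hpa.2.2 hpa'.2.1 hpa'.2.2
  subst ha
  have hb : b = b' := partnered_unique_b hab hab'
  subst hb
  have hj : j = j' := by
    have e1 : cnt p true b = j := hpb.2.2
    have e2 : cnt p true b = j' := hpb'.2.2
    omega
  subst hj
  exact nth_unique hu.2.1 hu.2.2 hu'.2.1 hu'.2.2

/-- Uniqueness of the partner of the one-endpoint. -/
lemma MR_unique_left {n : ℕ} {w p : ℕ → Bool} {v u u' : ℕ}
    (h : MR n w p u v) (h' : MR n w p u' v) : u = u' := by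
  obtain ⟨i, j, a, b, _, _, _, _, hpa, hpb, hab, hu, hv⟩ := h
  obtain ⟨i', j', a', b', _, _, _, _, hpa', hpb', hab', hu', hv'⟩ := h'
  have hj : j = j' := by
    have e1 : cnt w true v = j := hv.2.2
    have e2 : cnt w true v = j' := hv'.2.2
    omega
  subst hj
  have hb : b = b' := nth_unique hpb.2.1 hpb.2.2 hpb'.2.1 hpb'.2.2
  subst hb
  have ha : a = a' := partnered_unique_a hab hab'
  subst ha
  have hi : i = i' := by
    have e1 : cnt p false a = i := hpa.2.2
    have e2 : cnt p false a = i' := hpa'.2.2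
    omega
  subst hi
  exact nth_unique hu.2.1 hu.2.2 hu'.2.1 hu'.2.2

end Stmt15Aux

/-- if `p` does not exceed `w` and the `i`-th up-step of `p` is partnered
with the `j`-th down-step of `p`, then the position of the `i`-th `0` of `w` is smaller
than the position of the `j`-th `1` of `w`; consequently `M(w,p)` is a well-defined
matching on `[2m]` with base `w`. -/
theorem stmt15 (m : ℕ) (w p : ℕ → Bool) (hw : IsDyckWord (2*m) w)
    (hp : IsDyckWord (2*m) p) (hle : DoesNotExceed (2*m) p w) :
    (∀ i j a b a' b' : ℕ, a ≤ 2*m → b ≤ 2*m → a' ≤ 2*m → b' ≤ 2*m →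
      IsNthZero p i a → IsNthOne p j b → Partnered p a b →
      IsNthZero w i a' → IsNthOne w j b' → a' < b') ∧
    IsMatchingOn (2*m) (Mwp (2*m) w p) ∧ HasBase (2*m) (Mwp (2*m) w p) w := by
  classical
  refine ⟨?_, ⟨?_, ?_⟩, ?_⟩
  · intro i j a b a' b' han hbn _ _ hia hjb hab hia' hjb'
    exact Stmt15Aux.key_lt hle han hbn hia hjb hab hia' hjb'
  · intro u v huv
    rw [Stmt15Aux.mwp_adj] at huv
    rcases huv.2 with h | h
    · obtain ⟨_, _, h3, h4, h5, h6⟩ := Stmt15Aux.MR_false_true h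
      exact ⟨h3, h5, h4, h6⟩
    · obtain ⟨_, _, h3, h4, h5, h6⟩ := Stmt15Aux.MR_false_true h
      exact ⟨h4, h6, h3, h5⟩
  · intro v hv1 hvn
    cases hvf : w v with
    | false =>
      obtain ⟨u, hvu, hMR⟩ := Stmt15Aux.MR_exists_of_false hw hp hle hv1 hvn hvf
      have hne : v ≠ u := by omega
      refine ⟨u, ?_, ?_⟩
      · show (Mwp (2*m) w p).Adj v u
        rw [Stmt15Aux.mwp_adj]
        exact ⟨hne, Or.inl hMR⟩
      · intro u' hu'
        rw [Stmt15Aux.mwp_adj] at hu'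
        rcases hu'.2 with h | h
        · exact Stmt15Aux.MR_unique_right h hMR
        · have hcontra := (Stmt15Aux.MR_false_true h).2.1
          rw [hvf] at hcontra
          exact absurd hcontra Bool.false_ne_true
    | true =>
      obtain ⟨u, huv, hMR⟩ := Stmt15Aux.MR_exists_of_true hw hp hle hv1 hvn hvf
      have hne : v ≠ u := by omega
      refine ⟨u, ?_, ?_⟩
      · show (Mwp (2*m) w p).Adj v u
        rw [Stmt15Aux.mwp_adj]
        exact ⟨hne, Or.inr hMR⟩
      · intro u' hu'
        rw [Stmt15Aux.mwp_adj] at hu'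
        rcases hu'.2 with h | h
        · have hcontra := (Stmt15Aux.MR_false_true h).1
          rw [hvf] at hcontra
          exact absurd hcontra (by simp)
        · exact Stmt15Aux.MR_unique_left h hMR
  · intro v hv1 hvn
    constructor
    · intro hvt
      obtain ⟨u, huv, hMR⟩ := Stmt15Aux.MR_exists_of_true hw hp hle hv1 hvn hvt
      refine ⟨u, huv, ?_⟩
      rw [Stmt15Aux.mwp_adj]
      exact ⟨by omega, Or.inr hMR⟩
    · rintro ⟨u, huv, hadj⟩
      rw [Stmt15Aux.mwp_adj] at hadj
      rcases hadj.2 with h | h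
      · obtain ⟨i, j, a, b, han, hbn, _, _, hpa, hpb, hab, hvz, huo⟩ := h
        have := Stmt15Aux.key_lt hle han hbn hpa hpb hab hvz huo
        omega
      · exact (Stmt15Aux.MR_false_true h).2.1
end

section
/- Let w and p be Dyck words of length 2m such that p does not exceed w. Then the matching M(w,p) avoids M_231. -/
namespace Stmt16Aux

/-- Count of letters equal to `c` among the first `t` letters. -/
def cnt (w : ℕ → Bool) (c : Bool) (t : ℕ) : ℕ :=
  ((Finset.Icc 1 t).filter fun i => w i = c).card

lemma cnt_mono (w : ℕ → Bool) (c : Bool) {s t : ℕ} (h : s ≤ t) :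
    cnt w c s ≤ cnt w c t := by
  apply Finset.card_le_card
  apply Finset.filter_subset_filter
  exact Finset.Icc_subset_Icc le_rfl h

lemma cnt_succ (w : ℕ → Bool) (c : Bool) (t : ℕ) :
    cnt w c (t + 1) = cnt w c t + (if w (t+1) = c then 1 else 0) := by
  have hins : Finset.Icc 1 (t+1) = insert (t+1) (Finset.Icc 1 t) := by
    ext x; simp [Finset.mem_Icc]; omega
  have hnm : (t+1) ∉ (Finset.Icc 1 t).filter fun i => w i = c := by
    simp [Finset.mem_Icc]
  rw [cnt, cnt, hins, Finset.filter_insert]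
  split_ifs with h
  · rw [Finset.card_insert_of_notMem hnm]
  · rfl

lemma cnt_succ_of (w : ℕ → Bool) {c : Bool} {a : ℕ} (h1 : 1 ≤ a) (h2 : w a = c) :
    cnt w c a = cnt w c (a - 1) + 1 := by
  obtain ⟨k, rfl⟩ : ∃ k, a = k + 1 := ⟨a - 1, by omega⟩
  simp [cnt_succ, h2]

lemma cnt_add (w : ℕ → Bool) (t : ℕ) : cnt w false t + cnt w true t = t := by
  induction t with
  | zero => simp [cnt]
  | succ n ih =>
    rw [cnt_succ, cnt_succ]
    cases h : w (n+1) <;> simp [h] <;> omega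

lemma height_eq (w : ℕ → Bool) (t : ℕ) :
    heightAt w t = (cnt w false t : ℤ) - (cnt w true t : ℤ) := rfl

lemma lt_of_cnt_lt {w : ℕ → Bool} {c : Bool} {u u' : ℕ}
    (h : cnt w c u < cnt w c u') : u < u' := by
  by_contra hcon
  push_neg at hcon
  exact absurd (cnt_mono w c hcon) (by omega)

lemma cnt_lt_of_lt {w : ℕ → Bool} {c : Bool} {u u' : ℕ}
    (h : u < u') (hc : w u' = c) : cnt w c u < cnt w c u' := by
  have h1 : cnt w c u ≤ cnt w c (u' - 1) := cnt_mono w c (by omega)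
  have h2 : cnt w c u' = cnt w c (u' - 1) + 1 := cnt_succ_of w (by omega) hc
  omega

/-- Base lemma: in `M(w,p)`, the zero endpoint precedes the one endpoint. -/
lemma base_lt {m : ℕ} {w p : ℕ → Bool} (hle : DoesNotExceed (2*m) p w)
    {i j a b u v : ℕ} (ha : a ≤ 2*m)
    (hz : IsNthZero p i a) (ho : IsNthOne p j b) (hab : Partnered p a b)
    (hzu : IsNthZero w i u) (hov : IsNthOne w j v) : u < v := by
  obtain ⟨ha1, hpa, hcnt0⟩ := hz
  obtain ⟨hb1, hpb, hcnt1⟩ := ho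
  have hab1 : a < b := hab.1
  have hcnt0' : cnt p false a = i := hcnt0
  have hcnt1' : cnt p true b = j := hcnt1
  have h1 : cnt p true a ≤ cnt p true (b-1) := cnt_mono p true (by omega)
  have h2 : cnt p true b = cnt p true (b-1) + 1 := cnt_succ_of p (by omega) hpb
  have hpt : cnt p true a < j := by omega
  have hs1 := cnt_add p a
  have hs2 := cnt_add w a
  have hh := hle a ha
  rw [height_eq, height_eq] at hh
  have hw0 : i ≤ cnt w false a := by omega
  have hw1 : cnt w true a < j := by omega
  have hu : u ≤ a := by
    by_contra hcon
    push_neg at hcon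
    have hx : cnt w false u = cnt w false (u-1) + 1 := cnt_succ_of w hzu.1 hzu.2.1
    have hy : cnt w false a ≤ cnt w false (u-1) := cnt_mono w false (by omega)
    have hz' : cnt w false u = i := hzu.2.2
    omega
  have hv : a < v := by
    have hcv : cnt w true v = j := hov.2.2
    by_contra hcon
    push_neg at hcon
    have := cnt_mono w true hcon
    omega
  omega

/-- Partnered arcs of `p` cannot cross. -/
lemma no_cross {p : ℕ → Bool} {a1 b1 a2 b2 : ℕ}
    (h1 : Partnered p a1 b1) (h2 : Partnered p a2 b2)
    (h12 : a1 < a2) (h21 : a2 < b1) (hbb : b1 < b2) : False := by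
  have k1 : heightAt p (a1-1) < heightAt p (a2-1) := h1.2.2 (a2-1) (by omega) (by omega)
  have k2 : heightAt p (a2-1) < heightAt p b1 := h2.2.2 b1 (by omega) hbb
  have heq : heightAt p b1 = heightAt p (a1-1) := h1.2.1
  omega

lemma edge_struct {m : ℕ} {w p : ℕ → Bool} (hle : DoesNotExceed (2*m) p w)
    {u v : ℕ} (hadj : (Mwp (2*m) w p).Adj u v) (huv : u < v) :
    ∃ i j a b : ℕ, a ≤ 2*m ∧ IsNthZero p i a ∧ IsNthOne p j b ∧ Partnered p a b ∧
      IsNthZero w i u ∧ IsNthOne w j v := by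
  rw [Mwp, SimpleGraph.fromRel_adj] at hadj
  obtain ⟨hne, h | h⟩ := hadj
  · obtain ⟨i, j, a, b, ha, hb, hun, hvn, hz, ho, hab, hzu, hov⟩ := h
    exact ⟨i, j, a, b, ha, hz, ho, hab, hzu, hov⟩
  · obtain ⟨i, j, a, b, ha, hb, hun, hvn, hz, ho, hab, hzu, hov⟩ := h
    exact absurd (base_lt hle ha hz ho hab hzu hov) (by omega)

end Stmt16Aux

open Stmt16Aux

/-- if `w` and `p` are Dyck words of length `2m` and `p` does not exceed `w`,
then the matching `M(w,p)` avoids `M_231`. -/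
theorem stmt16 (m : ℕ) (w p : ℕ → Bool) (hw : IsDyckWord (2*m) w)
    (hp : IsDyckWord (2*m) p) (hle : DoesNotExceed (2*m) p w) :
    ¬ ContainsPat (Mwp (2*m) w p) M231 := by
  rintro ⟨f, hf, hadj⟩
  have m15 : M231.Adj 1 5 := by simp [M231]
  have m26 : M231.Adj 2 6 := by simp [M231]
  have m34 : M231.Adj 3 4 := by simp [M231]
  have f12 : f 1 < f 2 := hf (by norm_num)
  have f23 : f 2 < f 3 := hf (by norm_num)
  have f34 : f 3 < f 4 := hf (by norm_num)
  have f45 : f 4 < f 5 := hf (by norm_num)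
  have f56 : f 5 < f 6 := hf (by norm_num)
  obtain ⟨i1, j1, a1, b1, ha1n, hz1, ho1, hp1, hw1z, hw1o⟩ :=
    edge_struct hle (hadj 1 5 m15) (by omega)
  obtain ⟨i2, j2, a2, b2, ha2n, hz2, ho2, hp2, hw2z, hw2o⟩ :=
    edge_struct hle (hadj 2 6 m26) (by omega)
  obtain ⟨i3, j3, a3, b3, ha3n, hz3, ho3, hp3, hw3z, hw3o⟩ :=
    edge_struct hle (hadj 3 4 m34) (by omega)
  -- zero indices: f1 < f2 < f3 gives i1 < i2 < i3
  have c1 : cnt w false (f 1) = i1 := hw1z.2.2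
  have c2 : cnt w false (f 2) = i2 := hw2z.2.2
  have c3 : cnt w false (f 3) = i3 := hw3z.2.2
  have hi12 : i1 < i2 := by have := cnt_lt_of_lt f12 hw2z.2.1; omega
  have hi23 : i2 < i3 := by have := cnt_lt_of_lt f23 hw3z.2.1; omega
  -- one indices: f4 < f5 < f6 gives j3 < j1 < j2
  have d1 : cnt w true (f 5) = j1 := hw1o.2.2
  have d2 : cnt w true (f 6) = j2 := hw2o.2.2
  have d3 : cnt w true (f 4) = j3 := hw3o.2.2
  have hj31 : j3 < j1 := by have := cnt_lt_of_lt f45 hw1o.2.1; omega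
  have hj12 : j1 < j2 := by have := cnt_lt_of_lt f56 hw2o.2.1; omega
  -- positions in p
  have pa1 : cnt p false a1 = i1 := hz1.2.2
  have pa2 : cnt p false a2 = i2 := hz2.2.2
  have pa3 : cnt p false a3 = i3 := hz3.2.2
  have pb1 : cnt p true b1 = j1 := ho1.2.2
  have pb2 : cnt p true b2 = j2 := ho2.2.2
  have pb3 : cnt p true b3 = j3 := ho3.2.2
  have ha12 : a1 < a2 := lt_of_cnt_lt (w:=p) (c:=false) (by omega)
  have ha23 : a2 < a3 := lt_of_cnt_lt (w:=p) (c:=false) (by omega)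
  have hb31 : b3 < b1 := lt_of_cnt_lt (w:=p) (c:=true) (by omega)
  have hb12 : b1 < b2 := lt_of_cnt_lt (w:=p) (c:=true) (by omega)
  have hab3 : a3 < b3 := hp3.1
  have hne : a2 ≠ b1 := by
    intro h
    have h1 : p a2 = false := hz2.2.1
    have h2 : p b1 = true := ho1.2.1
    rw [h, h2] at h1
    exact absurd h1 (by simp)
  rcases lt_or_gt_of_ne hne with h | h
  · exact no_cross hp1 hp2 ha12 h hb12
  · omega
end

section
/- Let w be a Dyck word of length 2m and let M be a matching on [2m] with base w that avoids M_231. Then there exists a unique Dyck word p of length 2m such that p does not exceed w and M = M(w,p). -/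
namespace S17

/-- number of positions `s ∈ [1,t]` with `x s = v`. -/
def cnt (x : ℕ → Bool) (v : Bool) (t : ℕ) : ℕ :=
  ((Finset.Icc 1 t).filter fun i => x i = v).card

lemma cnt_zero (x : ℕ → Bool) (v : Bool) : cnt x v 0 = 0 := by
  simp [cnt]

lemma cnt_succ (x : ℕ → Bool) (v : Bool) (t : ℕ) :
    cnt x v (t+1) = cnt x v t + if x (t+1) = v then 1 else 0 := by
  unfold cnt
  rw [show Finset.Icc 1 (t+1) = insert (t+1) (Finset.Icc 1 t) by
    ext y; simp only [Finset.mem_Icc, Finset.mem_insert]; omega]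
  rw [Finset.filter_insert]
  split
  · rw [Finset.card_insert_of_notMem (by simp)]
  · simp

lemma cnt_mono (x : ℕ → Bool) (v : Bool) : Monotone (cnt x v) := by
  intro s t hst
  exact Finset.card_le_card (Finset.filter_subset_filter _ (Finset.Icc_subset_Icc_right hst))

lemma cnt_add_cnt (x : ℕ → Bool) (t : ℕ) : cnt x false t + cnt x true t = t := by
  induction t with
  | zero => simp [cnt_zero]
  | succ n ih =>
    rw [cnt_succ, cnt_succ]
    cases h : x (n+1) <;> simp [h] <;> omega

lemma cnt_le (x : ℕ → Bool) (v : Bool) (t : ℕ) : cnt x v t ≤ t := by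
  have := cnt_add_cnt x t; cases v <;> omega

lemma cnt_pos_of (x : ℕ → Bool) (v : Bool) {t : ℕ} (h1 : 1 ≤ t) (h2 : x t = v) :
    1 ≤ cnt x v t := by
  apply Finset.card_pos.mpr
  exact ⟨t, Finset.mem_filter.mpr ⟨Finset.mem_Icc.mpr ⟨h1, le_refl _⟩, h2⟩⟩

lemma cnt_succ_of (x : ℕ → Bool) (v : Bool) {t : ℕ} (h1 : 1 ≤ t) (h2 : x t = v) :
    cnt x v t = cnt x v (t-1) + 1 := by
  obtain ⟨s, rfl⟩ : ∃ s, t = s + 1 := ⟨t - 1, by omega⟩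
  rw [cnt_succ, h2]; simp

lemma cnt_succ_of_ne (x : ℕ → Bool) (v : Bool) {t : ℕ} (h1 : 1 ≤ t) (h2 : x t ≠ v) :
    cnt x v t = cnt x v (t-1) := by
  obtain ⟨s, rfl⟩ : ∃ s, t = s + 1 := ⟨t - 1, by omega⟩
  rw [cnt_succ]; simp [h2]

/-- the position of the `i`-th letter `v` of `x`. -/
noncomputable def nth (x : ℕ → Bool) (v : Bool) (i : ℕ) : ℕ :=
  sInf {s | i ≤ cnt x v s}

section nth
variable {x : ℕ → Bool} {v : Bool} {m i t : ℕ}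

lemma nth_le_iff (hex : i ≤ cnt x v m) : nth x v i ≤ t ↔ i ≤ cnt x v t := by
  constructor
  · intro h
    have hmem : nth x v i ∈ {s | i ≤ cnt x v s} := Nat.sInf_mem ⟨m, (hex : i ≤ cnt x v m)⟩
    exact le_trans hmem (cnt_mono x v h)
  · intro h; exact Nat.sInf_le h

lemma cnt_nth (hi : 1 ≤ i) (hex : i ≤ cnt x v m) : cnt x v (nth x v i) = i := by
  have hne : Set.Nonempty {s | i ≤ cnt x v s} := ⟨m, (hex : i ≤ cnt x v m)⟩
  have h1 : i ≤ cnt x v (nth x v i) := Nat.sInf_mem hne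
  have hpos : 1 ≤ nth x v i := by
    rcases Nat.eq_zero_or_pos (nth x v i) with h0 | h
    · rw [h0, cnt_zero] at h1; omega
    · exact h
  by_contra hc
  have h4 : cnt x v (nth x v i) ≤ cnt x v (nth x v i - 1) + 1 := by
    obtain ⟨s, hs⟩ : ∃ s, nth x v i = s + 1 := ⟨nth x v i - 1, by omega⟩
    rw [hs, cnt_succ]; simp only [hs, Nat.add_sub_cancel]; split <;> omega
  have h3 : i ≤ cnt x v (nth x v i - 1) := by omega
  have : nth x v i ≤ nth x v i - 1 := Nat.sInf_le h3
  omega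

lemma nth_pos (hi : 1 ≤ i) (hex : i ≤ cnt x v m) : 1 ≤ nth x v i := by
  by_contra hc
  have h0 : nth x v i = 0 := by omega
  have := cnt_nth hi hex (x := x) (v := v)
  rw [h0, cnt_zero] at this; omega

lemma apply_nth (hi : 1 ≤ i) (hex : i ≤ cnt x v m) : x (nth x v i) = v := by
  by_contra hc
  have hpos := nth_pos hi hex (x := x) (v := v)
  have h1 := cnt_nth hi hex (x := x) (v := v)
  have h2 := cnt_succ_of_ne x v hpos hc
  have h3 : nth x v i ≤ nth x v i - 1 :=
    Nat.sInf_le (show i ≤ cnt x v (nth x v i - 1) by omega)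
  omega

lemma isNth (hi : 1 ≤ i) (hex : i ≤ cnt x v m) :
    1 ≤ nth x v i ∧ x (nth x v i) = v ∧ cnt x v (nth x v i) = i :=
  ⟨nth_pos hi hex, apply_nth hi hex, cnt_nth hi hex⟩

lemma nth_le (hi : 1 ≤ i) (hex : i ≤ cnt x v m) : nth x v i ≤ m :=
  (nth_le_iff hex).mpr hex

/-- uniqueness of the i-th `v` position -/
lemma nth_unique (hi : 1 ≤ i) (hex : i ≤ cnt x v m) {s : ℕ}
    (h1 : 1 ≤ s) (h2 : x s = v) (h3 : cnt x v s = i) : s = nth x v i := by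
  rcases lt_trichotomy s (nth x v i) with h | h | h
  · exfalso
    have : nth x v i ≤ s := Nat.sInf_le (by simp [h3])
    omega
  · exact h
  · exfalso
    have hA := cnt_nth hi hex (x := x) (v := v)
    have happ := apply_nth hi hex (x := x) (v := v)
    have hpos := nth_pos hi hex (x := x) (v := v)
    -- cnt at s ≥ cnt at nth + 1 since x s = v and s > nth
    have : cnt x v (s-1) ≥ cnt x v (nth x v i) := cnt_mono x v (by omega)
    have := cnt_succ_of x v h1 h2
    omega

lemma nth_strictMonoOn {i i' : ℕ} (hi : 1 ≤ i) (hii' : i < i') (hex : i' ≤ cnt x v m) :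
    nth x v i < nth x v i' := by
  have h1 : cnt x v (nth x v i) = i := cnt_nth hi (le_trans (le_of_lt hii') hex)
  have h2 : cnt x v (nth x v i') = i' := cnt_nth (by omega) hex
  by_contra hc
  have := cnt_mono x v (not_lt.mp hc)
  omega

end nth

lemma heightAt_eq (x : ℕ → Bool) (t : ℕ) :
    (((Finset.Icc 1 t).filter fun i => x i = false).card : ℤ) -
      (((Finset.Icc 1 t).filter fun i => x i = true).card : ℤ)
    = 2 * (cnt x false t : ℤ) - t := by
  have h := cnt_add_cnt x t
  unfold cnt at h
  unfold cnt
  omega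

end S17

namespace S17

lemma eq_of_cnt_eq {x : ℕ → Bool} {v : Bool} {s s' : ℕ} (h1 : 1 ≤ s) (h1' : 1 ≤ s')
    (h2 : x s = v) (h2' : x s' = v) (h3 : cnt x v s = cnt x v s') : s = s' := by
  rcases lt_trichotomy s s' with h | h | h
  · exfalso
    have := cnt_mono x v (show s ≤ s' - 1 by omega)
    have := cnt_succ_of x v h1' h2'
    have := cnt_pos_of x v h1 h2
    omega
  · exact h
  · exfalso
    have := cnt_mono x v (show s' ≤ s - 1 by omega)
    have := cnt_succ_of x v h1 h2
    have := cnt_pos_of x v h1' h2'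
    omega

end S17

namespace S17

lemma cnt_split (x : ℕ → Bool) (v : Bool) {s t : ℕ} (h : s ≤ t) :
    cnt x v t = cnt x v s + ((Finset.Ioc s t).filter fun i => x i = v).card := by
  unfold cnt
  rw [show Finset.Icc 1 t = Finset.Icc 1 s ∪ Finset.Ioc s t by
      ext y; simp only [Finset.mem_union, Finset.mem_Icc, Finset.mem_Ioc]; omega,
    Finset.filter_union, Finset.card_union_of_disjoint]
  apply Finset.disjoint_left.mpr
  intro y hy hy'
  simp only [Finset.mem_filter, Finset.mem_Icc, Finset.mem_Ioc] at hy hy'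
  omega

end S17

namespace S17

/-- the data of a `231`-avoiding bijection of `[1,m]` with inverse. -/
structure Good (m : ℕ) (σ τ : ℕ → ℕ) : Prop where
  mem : ∀ i, 1 ≤ i → i ≤ m → 1 ≤ σ i ∧ σ i ≤ m
  inv : ∀ i, 1 ≤ i → i ≤ m → τ (σ i) = i
  mem' : ∀ l, 1 ≤ l → l ≤ m → 1 ≤ τ l ∧ τ l ≤ m
  inv' : ∀ l, 1 ≤ l → l ≤ m → σ (τ l) = l
  avoid : ∀ k i j, 1 ≤ k → k < i → i < j → j ≤ m → σ j < σ k → σ k < σ i → False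

def Aw (σ : ℕ → ℕ) (i : ℕ) : ℕ := ((Finset.Ico 1 i).filter fun k => σ k < σ i).card
def aa (σ : ℕ → ℕ) (i : ℕ) : ℕ := i + Aw σ i
def Bw (σ : ℕ → ℕ) (i : ℕ) : ℕ := ((Finset.Ico 1 i).filter fun k => σ i < σ k).card
def bb (σ : ℕ → ℕ) (i : ℕ) : ℕ := 2 * σ i + Bw σ i
def pw (m : ℕ) (σ : ℕ → ℕ) (t : ℕ) : Bool :=
  !(decide (t ∈ (Finset.Icc 1 m).image (aa σ)))

lemma pw_false_iff (m : ℕ) (σ : ℕ → ℕ) (t : ℕ) :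
    pw m σ t = false ↔ ∃ i, 1 ≤ i ∧ i ≤ m ∧ aa σ i = t := by
  unfold pw
  simp [Finset.mem_image, Finset.mem_Icc, and_assoc]

lemma pw_true_iff (m : ℕ) (σ : ℕ → ℕ) (t : ℕ) :
    pw m σ t = true ↔ ∀ i, 1 ≤ i → i ≤ m → aa σ i ≠ t := by
  unfold pw
  simp [Finset.mem_image, Finset.mem_Icc, and_assoc]

variable {m : ℕ} {σ τ : ℕ → ℕ}

lemma Good.inj (hg : Good m σ τ) {i i' : ℕ} (hi1 : 1 ≤ i) (hi2 : i ≤ m)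
    (hi1' : 1 ≤ i') (hi2' : i' ≤ m) (h : σ i = σ i') : i = i' := by
  have := hg.inv i hi1 hi2
  have := hg.inv i' hi1' hi2'
  rw [h] at *; omega

lemma Good.A_le (hg : Good m σ τ) {i : ℕ} (hi1 : 1 ≤ i) (hi2 : i ≤ m) :
    Aw σ i ≤ σ i - 1 := by
  have h : Aw σ i ≤ (Finset.Ico 1 (σ i)).card := by
    apply Finset.card_le_card_of_injOn σ
    · intro k hk
      simp only [Finset.mem_coe, Finset.mem_filter, Finset.mem_Ico] at hk ⊢
      exact ⟨(hg.mem k hk.1.1 (by omega)).1, hk.2⟩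
    · intro k hk k' hk' he
      simp only [Finset.coe_filter, Set.mem_setOf_eq, Finset.mem_Ico] at hk hk'
      exact hg.inj hk.1.1 (by omega) hk'.1.1 (by omega) he
  simpa using h

lemma Good.A_le' (hg : Good m σ τ) (i : ℕ) : Aw σ i ≤ i - 1 := by
  have h : Aw σ i ≤ (Finset.Ico 1 i).card := Finset.card_le_card (Finset.filter_subset _ _)
  simpa using h

lemma Good.B_le (hg : Good m σ τ) {i : ℕ} (hi1 : 1 ≤ i) (hi2 : i ≤ m) :
    Bw σ i ≤ m - σ i := by
  have h : Bw σ i ≤ (Finset.Ioc (σ i) m).card := by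
    apply Finset.card_le_card_of_injOn σ
    · intro k hk
      simp only [Finset.mem_coe, Finset.mem_filter, Finset.mem_Ico, Finset.mem_Ioc] at hk ⊢
      exact ⟨hk.2, (hg.mem k hk.1.1 (by omega)).2⟩
    · intro k hk k' hk' he
      simp only [Finset.coe_filter, Set.mem_setOf_eq, Finset.mem_Ico] at hk hk'
      exact hg.inj hk.1.1 (by omega) hk'.1.1 (by omega) he
  simpa using h

lemma Good.AB (hg : Good m σ τ) {i : ℕ} (hi1 : 1 ≤ i) (hi2 : i ≤ m) :
    Aw σ i + Bw σ i = i - 1 := by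
  have h := Finset.card_filter_add_card_filter_not
    (s := Finset.Ico 1 i) (p := fun k => σ k < σ i)
  have he : (Finset.Ico 1 i).filter (fun k => ¬ σ k < σ i) =
      (Finset.Ico 1 i).filter (fun k => σ i < σ k) := by
    apply Finset.filter_congr
    intro k hk
    simp only [Finset.mem_Ico] at hk
    have : σ k ≠ σ i := fun hc => by
      have := hg.inj hk.1 (by omega) hi1 hi2 hc; omega
    constructor
    · intro h2; simp at h2 ⊢; omega
    · intro h2; simp at h2 ⊢; omega
  rw [he] at h
  have : (Finset.Ico 1 i).card = i - 1 := by simp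
  unfold Aw Bw
  omega

/-- strict monotonicity of `aa` -/
lemma Good.a_lt (hg : Good m σ τ) {i' i : ℕ} (h1 : 1 ≤ i') (h2 : i' < i) (h3 : i ≤ m) :
    aa σ i' < aa σ i := by
  have hA : Aw σ i' ≤ Aw σ i := by
    apply Finset.card_le_card
    intro k hk
    simp only [Finset.mem_filter, Finset.mem_Ico] at hk ⊢
    refine ⟨⟨hk.1.1, by omega⟩, ?_⟩
    by_contra hc
    push_neg at hc
    have hne : σ i ≠ σ k := fun he => by
      have := hg.inj (by omega : 1 ≤ i) h3 hk.1.1 (by omega) he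
      omega
    have hlt : σ i < σ k := by omega
    exact hg.avoid k i' i hk.1.1 hk.1.2 h2 h3 hlt hk.2
  unfold aa; omega

end S17

namespace S17

variable {m : ℕ} {σ τ : ℕ → ℕ}

lemma Good.a_lt_b (hg : Good m σ τ) {i : ℕ} (hi1 : 1 ≤ i) (hi2 : i ≤ m) :
    aa σ i < bb σ i := by
  have h1 := hg.AB hi1 hi2
  have h2 := hg.A_le hi1 hi2
  have h3 := (hg.mem i hi1 hi2).1
  unfold aa bb at *
  omega

/-- L2c : if `i < i'` and `σ i' < σ i` then `aa i' + 2 ≤ bb i`. -/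
lemma Good.L2c (hg : Good m σ τ) {i i' : ℕ} (hi1 : 1 ≤ i) (h2 : i < i') (h3 : i' ≤ m)
    (h4 : σ i' < σ i) : aa σ i' + 2 ≤ bb σ i := by
  have hc1 : ∀ k, i < k → k ≤ i' → σ k < σ i := by
    intro k hk1 hk2
    rcases eq_or_lt_of_le hk2 with rfl | hk2'
    · exact h4
    · by_contra hc
      have hne : σ k ≠ σ i := fun he => by
        have := hg.inj (by omega) (by omega) hi1 (by omega) he; omega
      exact hg.avoid i k i' hi1 hk1 hk2' h3 h4 (by omega)
  -- S := positions in [1,i'] with σ-value < σ i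
  set S := (Finset.Icc 1 i').filter (fun k => σ k < σ i) with hS
  have hsub : ((Finset.Ico 1 i).filter (fun k => σ k < σ i)) ∪ Finset.Ioc i i' ⊆ S := by
    intro k hk
    simp only [Finset.mem_union, Finset.mem_filter, Finset.mem_Ico, Finset.mem_Ioc,
      hS, Finset.mem_Icc] at hk ⊢
    rcases hk with ⟨⟨hk1, hk2⟩, hk3⟩ | ⟨hk1, hk2⟩
    · exact ⟨⟨hk1, by omega⟩, hk3⟩
    · exact ⟨⟨by omega, hk2⟩, hc1 k hk1 hk2⟩
  have hdisj : Disjoint ((Finset.Ico 1 i).filter (fun k => σ k < σ i)) (Finset.Ioc i i') := by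
    apply Finset.disjoint_left.mpr
    intro k hk hk'
    simp only [Finset.mem_filter, Finset.mem_Ico] at hk
    simp only [Finset.mem_Ioc] at hk'
    omega
  have hcard1 : Aw σ i + (i' - i) ≤ S.card := by
    have := Finset.card_le_card hsub
    rw [Finset.card_union_of_disjoint hdisj] at this
    simpa [Aw] using this
  have hcard2 : S.card ≤ σ i - 1 := by
    have h : S.card ≤ (Finset.Ico 1 (σ i)).card := by
      apply Finset.card_le_card_of_injOn σ
      · intro k hk
        simp only [Finset.mem_coe, hS, Finset.mem_filter, Finset.mem_Icc] at hk
        simp only [Finset.mem_coe, Finset.mem_Ico]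
        exact ⟨(hg.mem k hk.1.1 (by omega)).1, hk.2⟩
      · intro k hk k' hk' he
        simp only [hS, Finset.coe_filter, Set.mem_setOf_eq, Finset.mem_Icc] at hk hk'
        exact hg.inj hk.1.1 (by omega) hk'.1.1 (by omega) he
    simpa using h
  have h5 := hg.A_le (show 1 ≤ i' by omega) h3
  have h6 := hg.AB hi1 (by omega)
  have h7 := (hg.mem i' (by omega) h3).1
  unfold aa bb at *
  omega

/-- L2d : if `i < i'` and `σ i < σ i'` then `bb i + 1 ≤ aa i'`. -/
lemma Good.L2d (hg : Good m σ τ) {i i' : ℕ} (hi1 : 1 ≤ i) (h2 : i < i') (h3 : i' ≤ m)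
    (h4 : σ i < σ i') : bb σ i + 1 ≤ aa σ i' := by
  have hd1 : ∀ k, i' < k → k ≤ m → ¬ σ k < σ i := by
    intro k hk1 hk2 hc
    exact hg.avoid i i' k hi1 h2 hk1 hk2 hc h4
  have hσi := hg.mem i hi1 (by omega)
  -- T := positions in [1,i') with σ-value ≤ σ i; card = σ i
  set T := (Finset.Ico 1 i').filter (fun k => σ k ≤ σ i) with hT
  have hTcard : T.card = σ i := by
    have : T.card = (Finset.Icc 1 (σ i)).card := by
      apply Finset.card_bij (fun k _ => σ k)
      · intro k hk
        simp only [hT, Finset.mem_filter, Finset.mem_Ico] at hk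
        simp only [Finset.mem_Icc]
        exact ⟨(hg.mem k hk.1.1 (by omega)).1, hk.2⟩
      · intro k hk k' hk' he
        simp only [hT, Finset.mem_filter, Finset.mem_Ico] at hk hk'
        exact hg.inj hk.1.1 (by omega) hk'.1.1 (by omega) he
      · intro l hl
        simp only [Finset.mem_Icc] at hl
        have hlm : l ≤ m := by omega
        have hτ := hg.mem' l hl.1 hlm
        have hστ := hg.inv' l hl.1 hlm
        refine ⟨τ l, ?_, hστ⟩
        simp only [hT, Finset.mem_filter, Finset.mem_Ico]
        refine ⟨⟨hτ.1, ?_⟩, by rw [hστ]; exact hl.2⟩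
        -- τ l < i'
        rcases lt_trichotomy (τ l) i' with h | h | h
        · exact h
        · exfalso; rw [h] at hστ; omega
        · exfalso
          rcases eq_or_lt_of_le hl.2 with he | hlt
          · -- l = σ i, so τ l = i < i'
            have : τ l = i := by rw [he]; exact hg.inv i hi1 (by omega)
            omega
          · exact hd1 (τ l) h hτ.2 (by omega)
    simpa using this
  have hd3 : σ i ≤ Aw σ i' := by
    rw [← hTcard]
    apply Finset.card_le_card
    intro k hk
    simp only [hT, Finset.mem_filter, Finset.mem_Ico] at hk ⊢
    exact ⟨hk.1, by omega⟩
  have hd4 : σ i + Bw σ i + 1 ≤ i' := by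
    have hsub : T ∪ ((Finset.Ico 1 i).filter (fun k => σ i < σ k)) ⊆ Finset.Ico 1 i' := by
      intro k hk
      simp only [Finset.mem_union, hT, Finset.mem_filter, Finset.mem_Ico] at hk ⊢
      rcases hk with ⟨hk, _⟩ | ⟨⟨hk1, hk2⟩, _⟩
      · exact hk
      · exact ⟨hk1, by omega⟩
    have hdisj : Disjoint T ((Finset.Ico 1 i).filter (fun k => σ i < σ k)) := by
      apply Finset.disjoint_left.mpr
      intro k hk hk'
      simp only [hT, Finset.mem_filter, Finset.mem_Ico] at hk hk'
      omega
    have := Finset.card_le_card hsub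
    rw [Finset.card_union_of_disjoint hdisj] at this
    simp only [hTcard, Nat.card_Ico] at this
    unfold Bw
    omega
  unfold aa bb at *
  omega

/-- dichotomy : `aa i' ≤ bb i ↔ (i' ≤ i ∨ σ i' < σ i)`, and never equal. -/
lemma Good.a_ne_b (hg : Good m σ τ) {i i' : ℕ} (hi1 : 1 ≤ i) (hi2 : i ≤ m)
    (hi1' : 1 ≤ i') (hi2' : i' ≤ m) : aa σ i' ≠ bb σ i := by
  rcases lt_trichotomy i' i with h | rfl | h
  · have := hg.a_lt hi1' h hi2
    have := hg.a_lt_b hi1 hi2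
    omega
  · have := hg.a_lt_b hi1 hi2; omega
  · rcases lt_trichotomy (σ i') (σ i) with h4 | h4 | h4
    · have := hg.L2c hi1 h hi2' h4; omega
    · have := hg.inj hi1' hi2' hi1 hi2 h4; omega
    · have := hg.L2d hi1 h hi2' h4; omega

lemma Good.a_le_b_iff (hg : Good m σ τ) {i i' : ℕ} (hi1 : 1 ≤ i) (hi2 : i ≤ m)
    (hi1' : 1 ≤ i') (hi2' : i' ≤ m) : aa σ i' ≤ bb σ i ↔ (i' ≤ i ∨ σ i' < σ i) := by
  constructor
  · intro h
    by_contra hc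
    push_neg at hc
    obtain ⟨hc1, hc2⟩ := hc
    have h4 : σ i < σ i' := by
      rcases eq_or_lt_of_le hc2 with he | hlt
      · exfalso; have := hg.inj hi1 hi2 hi1' hi2' he; omega
      · exact hlt
    have := hg.L2d hi1 (by omega) hi2' h4
    omega
  · intro h
    rcases h with h | h
    · rcases eq_or_lt_of_le h with rfl | hlt
      · exact le_of_lt (hg.a_lt_b hi1 hi2)
      · have := hg.a_lt hi1' hlt hi2
        have := hg.a_lt_b hi1 hi2
        omega
    · rcases lt_trichotomy i' i with hh | rfl | hh
      · have := hg.a_lt hi1' hh hi2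
        have := hg.a_lt_b hi1 hi2
        omega
      · omega
      · have := hg.L2c hi1 hh hi2' h
        omega

end S17

namespace S17

def Za (m : ℕ) (σ : ℕ → ℕ) (t : ℕ) : ℕ := ((Finset.Icc 1 m).filter fun i => aa σ i ≤ t).card

variable {m : ℕ} {σ τ : ℕ → ℕ}

lemma aa_pos (i : ℕ) (hi : 1 ≤ i) : 1 ≤ aa σ i := by unfold aa; omega

lemma Good.aa_ub (hg : Good m σ τ) {i : ℕ} (hi : 1 ≤ i) : aa σ i ≤ 2*i - 1 := by
  have := hg.A_le' i; unfold aa; omega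

lemma Good.bb_le (hg : Good m σ τ) {i : ℕ} (hi1 : 1 ≤ i) (hi2 : i ≤ m) : bb σ i ≤ 2*m := by
  have := hg.B_le hi1 hi2
  have := (hg.mem i hi1 hi2).2
  unfold bb; omega

lemma Good.cnt_pw_false (hg : Good m σ τ) {t : ℕ} (ht : t ≤ 2*m) :
    cnt (pw m σ) false t = Za m σ t := by
  unfold cnt Za
  symm
  apply Finset.card_bij (fun i _ => aa σ i)
  · intro i hi
    simp only [Finset.mem_filter, Finset.mem_Icc] at hi ⊢
    refine ⟨⟨aa_pos i hi.1.1, hi.2⟩, ?_⟩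
    rw [pw_false_iff]
    exact ⟨i, hi.1.1, hi.1.2, rfl⟩
  · intro i hi i' hi' he
    simp only [Finset.mem_filter, Finset.mem_Icc] at hi hi'
    by_contra hc
    rcases lt_or_gt_of_ne hc with h | h
    · have := hg.a_lt hi.1.1 h hi'.1.2; omega
    · have := hg.a_lt hi'.1.1 h hi.1.2; omega
  · intro s hs
    simp only [Finset.mem_filter, Finset.mem_Icc] at hs
    obtain ⟨i, h1, h2, h3⟩ := (pw_false_iff m σ s).mp hs.2
    exact ⟨i, by simp only [Finset.mem_filter, Finset.mem_Icc]; omega, h3⟩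

lemma Good.Za_aa (hg : Good m σ τ) {i : ℕ} (hi1 : 1 ≤ i) (hi2 : i ≤ m) :
    Za m σ (aa σ i) = i := by
  unfold Za
  have : (Finset.Icc 1 m).filter (fun i' => aa σ i' ≤ aa σ i) = Finset.Icc 1 i := by
    ext i'
    simp only [Finset.mem_filter, Finset.mem_Icc]
    constructor
    · rintro ⟨⟨h1, h2⟩, h3⟩
      refine ⟨h1, ?_⟩
      by_contra hc
      have := hg.a_lt hi1 (by omega) h2
      omega
    · rintro ⟨h1, h2⟩
      refine ⟨⟨h1, by omega⟩, ?_⟩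
      rcases eq_or_lt_of_le h2 with rfl | h
      · exact le_refl _
      · exact le_of_lt (hg.a_lt h1 h hi2)
  rw [this]; simp

lemma Good.Za_aa_pred (hg : Good m σ τ) {i : ℕ} (hi1 : 1 ≤ i) (hi2 : i ≤ m) :
    Za m σ (aa σ i - 1) = i - 1 := by
  unfold Za
  have : (Finset.Icc 1 m).filter (fun i' => aa σ i' ≤ aa σ i - 1) = Finset.Icc 1 (i-1) := by
    ext i'
    simp only [Finset.mem_filter, Finset.mem_Icc]
    constructor
    · rintro ⟨⟨h1, h2⟩, h3⟩
      refine ⟨h1, ?_⟩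
      by_contra hc
      have h4 : i ≤ i' := by omega
      have : aa σ i ≤ aa σ i' := by
        rcases eq_or_lt_of_le h4 with rfl | h
        · exact le_refl _
        · exact le_of_lt (hg.a_lt hi1 h h2)
      have := aa_pos (σ := σ) i hi1
      omega
    · rintro ⟨h1, h2⟩
      have := hg.a_lt h1 (show i' < i by omega) hi2
      exact ⟨⟨h1, by omega⟩, by omega⟩
  rw [this]; simp

lemma Good.count_lt (hg : Good m σ τ) {i : ℕ} (hi1 : 1 ≤ i) (hi2 : i ≤ m) :
    ((Finset.Icc 1 m).filter (fun k => σ k < σ i)).card = σ i - 1 := by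
  have : ((Finset.Icc 1 m).filter (fun k => σ k < σ i)).card = (Finset.Ico 1 (σ i)).card := by
    apply Finset.card_bij (fun k _ => σ k)
    · intro k hk
      simp only [Finset.mem_filter, Finset.mem_Icc] at hk
      simp only [Finset.mem_Ico]
      exact ⟨(hg.mem k hk.1.1 hk.1.2).1, hk.2⟩
    · intro k hk k' hk' he
      simp only [Finset.mem_filter, Finset.mem_Icc] at hk hk'
      exact hg.inj hk.1.1 hk.1.2 hk'.1.1 hk'.1.2 he
    · intro l hl
      simp only [Finset.mem_Ico] at hl
      have hlm : l ≤ m := by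
        have := (hg.mem i hi1 hi2).2; omega
      have hτ := hg.mem' l hl.1 hlm
      have hστ := hg.inv' l hl.1 hlm
      refine ⟨τ l, ?_, hστ⟩
      simp only [Finset.mem_filter, Finset.mem_Icc]
      exact ⟨⟨hτ.1, hτ.2⟩, by rw [hστ]; exact hl.2⟩
  simp at this
  omega

lemma Good.count_lt_split (hg : Good m σ τ) {i : ℕ} (hi1 : 1 ≤ i) (hi2 : i ≤ m) :
    ((Finset.Ioc i m).filter (fun k => σ k < σ i)).card = σ i - 1 - Aw σ i := by
  have hsplit : (Finset.Icc 1 m).filter (fun k => σ k < σ i) =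
      ((Finset.Ico 1 i).filter (fun k => σ k < σ i)) ∪
      ((Finset.Ioc i m).filter (fun k => σ k < σ i)) := by
    ext k
    simp only [Finset.mem_union, Finset.mem_filter, Finset.mem_Icc, Finset.mem_Ico,
      Finset.mem_Ioc]
    constructor
    · rintro ⟨⟨h1, h2⟩, h3⟩
      rcases lt_trichotomy k i with h | rfl | h
      · exact Or.inl ⟨⟨h1, h⟩, h3⟩
      · omega
      · exact Or.inr ⟨⟨h, h2⟩, h3⟩
    · rintro (⟨⟨h1, h2⟩, h3⟩ | ⟨⟨h1, h2⟩, h3⟩)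
      · exact ⟨⟨h1, by omega⟩, h3⟩
      · exact ⟨⟨by omega, h2⟩, h3⟩
  have hdisj : Disjoint ((Finset.Ico 1 i).filter (fun k => σ k < σ i))
      ((Finset.Ioc i m).filter (fun k => σ k < σ i)) := by
    apply Finset.disjoint_left.mpr
    intro k hk hk'
    simp only [Finset.mem_filter, Finset.mem_Ico, Finset.mem_Ioc] at hk hk'
    omega
  have h1 := hg.count_lt hi1 hi2
  rw [hsplit, Finset.card_union_of_disjoint hdisj] at h1
  unfold Aw
  omega

lemma Good.Za_bb (hg : Good m σ τ) {i : ℕ} (hi1 : 1 ≤ i) (hi2 : i ≤ m) :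
    Za m σ (bb σ i) = i + (σ i - 1 - Aw σ i) := by
  unfold Za
  have : (Finset.Icc 1 m).filter (fun i' => aa σ i' ≤ bb σ i) =
      Finset.Icc 1 i ∪ ((Finset.Ioc i m).filter (fun k => σ k < σ i)) := by
    ext i'
    simp only [Finset.mem_union, Finset.mem_filter, Finset.mem_Icc, Finset.mem_Ioc]
    constructor
    · rintro ⟨⟨h1, h2⟩, h3⟩
      rcases (hg.a_le_b_iff hi1 hi2 h1 h2).mp h3 with h | h
      · exact Or.inl ⟨h1, h⟩
      · rcases le_or_gt i' i with h' | h'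
        · exact Or.inl ⟨h1, h'⟩
        · exact Or.inr ⟨⟨h', h2⟩, h⟩
    · rintro (⟨h1, h2⟩ | ⟨⟨h1, h2⟩, h3⟩)
      · exact ⟨⟨h1, by omega⟩, (hg.a_le_b_iff hi1 hi2 h1 (by omega)).mpr (Or.inl h2)⟩
      · exact ⟨⟨by omega, h2⟩, (hg.a_le_b_iff hi1 hi2 (by omega) h2).mpr (Or.inr h3)⟩
  rw [this, Finset.card_union_of_disjoint]
  · rw [hg.count_lt_split hi1 hi2]
    simp
  · apply Finset.disjoint_left.mpr
    intro k hk hk'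
    simp only [Finset.mem_Icc] at hk
    simp only [Finset.mem_filter, Finset.mem_Ioc] at hk'
    omega

lemma Good.Za_2m (hg : Good m σ τ) : Za m σ (2*m) = m := by
  unfold Za
  have : (Finset.Icc 1 m).filter (fun i' => aa σ i' ≤ 2*m) = Finset.Icc 1 m := by
    apply Finset.filter_true_of_mem
    intro i hi
    simp only [Finset.mem_Icc] at hi
    have := hg.aa_ub hi.1
    omega
  rw [this]; simp

lemma Good.Za_lb (hg : Good m σ τ) {k : ℕ} (hk : k ≤ 2*m) : k ≤ 2 * Za m σ k := by
  rcases Nat.eq_zero_or_pos k with rfl | hk0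
  · simp
  have hi2 : (k+1)/2 ≤ m := by omega
  have hi1 : 1 ≤ (k+1)/2 := by omega
  have hsub : Finset.Icc 1 ((k+1)/2) ⊆ (Finset.Icc 1 m).filter (fun i' => aa σ i' ≤ k) := by
    intro i' hi'
    simp only [Finset.mem_Icc] at hi'
    simp only [Finset.mem_filter, Finset.mem_Icc]
    refine ⟨⟨hi'.1, by omega⟩, ?_⟩
    have := hg.aa_ub hi'.1
    omega
  have := Finset.card_le_card hsub
  simp only [Nat.card_Icc] at this
  unfold Za
  omega

lemma Good.cnt_pw_true (hg : Good m σ τ) {t : ℕ} (ht : t ≤ 2*m) :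
    cnt (pw m σ) true t = t - Za m σ t := by
  have h1 := cnt_add_cnt (pw m σ) t
  have h2 := hg.cnt_pw_false ht
  omega

lemma Good.pw_dyck (hg : Good m σ τ) : IsDyckWord (2*m) (pw m σ) := by
  constructor
  · show 2 * cnt (pw m σ) true (2*m) = 2*m
    rw [hg.cnt_pw_true (le_refl _), hg.Za_2m]
    omega
  · intro k hk
    show 2 * cnt (pw m σ) true k ≤ k
    rw [hg.cnt_pw_true hk]
    have h1 := hg.Za_lb hk
    have h2 : Za m σ k ≤ k := by
      have h3 := hg.cnt_pw_false hk
      have := cnt_le (pw m σ) false k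
      omega
    omega

end S17

namespace S17

variable {m : ℕ} {σ τ : ℕ → ℕ}

lemma Good.hp_height (hg : Good m σ τ) {t : ℕ} (ht : t ≤ 2*m) :
    heightAt (pw m σ) t = 2*(Za m σ t : ℤ) - t := by
  unfold heightAt
  rw [heightAt_eq]
  rw [show cnt (pw m σ) false t = Za m σ t from hg.cnt_pw_false ht]

lemma Good.isNthZero_aa (hg : Good m σ τ) {i : ℕ} (hi1 : 1 ≤ i) (hi2 : i ≤ m) :
    IsNthZero (pw m σ) i (aa σ i) := by
  refine ⟨aa_pos i hi1, ?_, ?_⟩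
  · rw [pw_false_iff]; exact ⟨i, hi1, hi2, rfl⟩
  · show cnt (pw m σ) false (aa σ i) = i
    rw [hg.cnt_pw_false (by have := hg.aa_ub hi1; omega)]
    exact hg.Za_aa hi1 hi2

lemma Good.pw_bb_true (hg : Good m σ τ) {i : ℕ} (hi1 : 1 ≤ i) (hi2 : i ≤ m) :
    pw m σ (bb σ i) = true := by
  rw [pw_true_iff]
  intro i' h1 h2
  exact hg.a_ne_b hi1 hi2 h1 h2

lemma Good.cnt_true_bb (hg : Good m σ τ) {i : ℕ} (hi1 : 1 ≤ i) (hi2 : i ≤ m) :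
    cnt (pw m σ) true (bb σ i) = σ i := by
  rw [hg.cnt_pw_true (hg.bb_le hi1 hi2), hg.Za_bb hi1 hi2]
  have h1 := hg.AB hi1 hi2
  have h2 := hg.A_le hi1 hi2
  have h3 := (hg.mem i hi1 hi2).1
  unfold bb
  omega

lemma Good.isNthOne_bb (hg : Good m σ τ) {i : ℕ} (hi1 : 1 ≤ i) (hi2 : i ≤ m) :
    IsNthOne (pw m σ) (σ i) (bb σ i) := by
  refine ⟨?_, hg.pw_bb_true hi1 hi2, hg.cnt_true_bb hi1 hi2⟩
  have := (hg.mem i hi1 hi2).1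
  unfold bb; omega

lemma Good.key_interior (hg : Good m σ τ) {i t : ℕ} (hi1 : 1 ≤ i) (hi2 : i ≤ m)
    (ht1 : aa σ i ≤ t) (ht2 : t < bb σ i) :
    cnt (pw m σ) true t + i ≤ Za m σ t + Aw σ i := by
  have hbb2m := hg.bb_le hi1 hi2
  have ht2m : t ≤ 2*m := by omega
  have haa2m : aa σ i ≤ 2*m := by omega
  -- count of ones in (aa i, t]
  have hsplit1 := cnt_split (pw m σ) true ht1
  -- cnt true (aa i) = Aw i
  have hcnt_aa : cnt (pw m σ) true (aa σ i) = Aw σ i := by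
    rw [hg.cnt_pw_true haa2m, hg.Za_aa hi1 hi2]
    unfold aa; omega
  -- count of indices in (i, m] with aa ≤ t
  have hsplit2 : Za m σ t =
      i + ((Finset.Ioc i m).filter (fun i' => aa σ i' ≤ t)).card := by
    unfold Za
    rw [show Finset.Icc 1 m = Finset.Icc 1 i ∪ Finset.Ioc i m by
        ext y; simp only [Finset.mem_union, Finset.mem_Icc, Finset.mem_Ioc]; omega,
      Finset.filter_union, Finset.card_union_of_disjoint]
    · congr 1
      rw [Finset.filter_true_of_mem, Nat.card_Icc]
      · omega
      · intro i' hi'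
        simp only [Finset.mem_Icc] at hi'
        calc aa σ i' ≤ aa σ i := by
              rcases eq_or_lt_of_le hi'.2 with rfl | h
              · exact le_refl _
              · exact le_of_lt (hg.a_lt hi'.1 h hi2)
          _ ≤ t := ht1
    · apply Finset.disjoint_left.mpr
      intro y hy hy'
      simp only [Finset.mem_filter, Finset.mem_Icc, Finset.mem_Ioc] at hy hy'
      omega
  -- the injection
  have hinj : ((Finset.Ioc (aa σ i) t).filter fun s => pw m σ s = true).card ≤
      ((Finset.Ioc i m).filter (fun i' => aa σ i' ≤ t)).card := by
    have hcnt2m : cnt (pw m σ) true (2*m) = m := by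
      rw [hg.cnt_pw_true (le_refl _), hg.Za_2m]; omega
    apply Finset.card_le_card_of_injOn (fun s => τ (cnt (pw m σ) true s))
    · intro s hs
      simp only [Finset.mem_coe, Finset.mem_filter, Finset.mem_Ioc] at hs ⊢
      obtain ⟨⟨hs1, hs2⟩, hs3⟩ := hs
      set l := cnt (pw m σ) true s with hl
      have hl1 : 1 ≤ l := cnt_pos_of _ _ (by have := aa_pos (σ := σ) i hi1; omega) hs3
      have hl2 : l ≤ m := by
        have := cnt_mono (pw m σ) true (show s ≤ 2*m by omega)
        omega
      have hk1 := hg.mem' l hl1 hl2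
      have hk2 := hg.inv' l hl1 hl2
      set k := τ l with hk
      -- s = bb σ k
      have hs_eq : s = bb σ k := by
        apply eq_of_cnt_eq (v := true) (by omega) (by
          have := (hg.mem k hk1.1 hk1.2).1; unfold bb; omega) hs3
          (hg.pw_bb_true hk1.1 hk1.2)
        rw [hg.cnt_true_bb hk1.1 hk1.2, hk2, hl]
      -- l < σ i
      have hlσ : l < σ i := by
        have hbbpos : 1 ≤ bb σ i := by
          have := (hg.mem i hi1 hi2).1; unfold bb; omega
        have h5 := cnt_succ_of (pw m σ) true hbbpos (hg.pw_bb_true hi1 hi2)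
        have h6 := cnt_mono (pw m σ) true (show s ≤ bb σ i - 1 by omega)
        have h7 := hg.cnt_true_bb hi1 hi2
        omega
      -- k > i
      have hki : i < k := by
        rcases lt_trichotomy k i with h | rfl | h
        · exfalso
          have := (hg.a_le_b_iff hk1.1 hk1.2 hi1 hi2).mp
            (show aa σ i ≤ bb σ k by omega)
          rw [hk2] at this
          rcases this with h' | h' <;> omega
        · exfalso
          omega
        · exact h
      refine ⟨⟨hki, hk1.2⟩, ?_⟩
      have := hg.a_lt_b hk1.1 hk1.2
      omega
    · intro s hs s' hs' he
      simp only [Finset.coe_filter, Set.mem_setOf_eq, Finset.mem_Ioc] at hs hs'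
      have hl1 : 1 ≤ cnt (pw m σ) true s :=
        cnt_pos_of _ _ (by have := aa_pos (σ := σ) i hi1; omega) hs.2
      have hl2 : cnt (pw m σ) true s ≤ m := by
        have := cnt_mono (pw m σ) true (show s ≤ 2*m by omega)
        omega
      have hl1' : 1 ≤ cnt (pw m σ) true s' :=
        cnt_pos_of _ _ (by have := aa_pos (σ := σ) i hi1; omega) hs'.2
      have hl2' : cnt (pw m σ) true s' ≤ m := by
        have := cnt_mono (pw m σ) true (show s' ≤ 2*m by omega)
        omega
      replace he : τ (cnt (pw m σ) true s) = τ (cnt (pw m σ) true s') := he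
      have : cnt (pw m σ) true s = cnt (pw m σ) true s' := by
        have e1 := hg.inv' _ hl1 hl2
        have e2 := hg.inv' _ hl1' hl2'
        rw [← e1, ← e2, he]
      exact eq_of_cnt_eq (v := true) (by omega) (by omega) hs.2 hs'.2 this
  omega

lemma Good.partnered (hg : Good m σ τ) {i : ℕ} (hi1 : 1 ≤ i) (hi2 : i ≤ m) :
    Partnered (pw m σ) (aa σ i) (bb σ i) := by
  have hbb2m := hg.bb_le hi1 hi2
  have haa2m : aa σ i ≤ 2*m := by have := hg.a_lt_b hi1 hi2; omega
  refine ⟨hg.a_lt_b hi1 hi2, ?_, ?_⟩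
  · rw [hg.hp_height hbb2m, hg.hp_height (show aa σ i - 1 ≤ 2*m by omega),
      hg.Za_bb hi1 hi2, hg.Za_aa_pred hi1 hi2]
    have h1 := hg.AB hi1 hi2
    have h2 := hg.A_le hi1 hi2
    have h3 := (hg.mem i hi1 hi2).1
    have h4 := aa_pos (σ := σ) i hi1
    unfold aa bb at *
    push_cast
    omega
  · intro t ht1 ht2
    rw [hg.hp_height (show aa σ i - 1 ≤ 2*m by omega),
      hg.hp_height (show t ≤ 2*m by omega), hg.Za_aa_pred hi1 hi2]
    have hkey := hg.key_interior hi1 hi2 ht1 ht2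
    have hcntt := hg.cnt_pw_true (show t ≤ 2*m by omega)
    have h2 := hg.A_le hi1 hi2
    have h4 := aa_pos (σ := σ) i hi1
    have h5 : Za m σ t ≤ t := by
      have h3 := hg.cnt_pw_false (show t ≤ 2*m by omega)
      have := cnt_le (pw m σ) false t
      omega
    have h6 : aa σ i ≤ t := ht1
    unfold aa at *
    push_cast
    omega

end S17

namespace S17

lemma heightAt_cnt (x : ℕ → Bool) (t : ℕ) :
    heightAt x t = 2*(cnt x false t : ℤ) - t := by
  unfold heightAt
  exact heightAt_eq x t

lemma heightAt_succ_false {x : ℕ → Bool} {s : ℕ} (h1 : 1 ≤ s) (h2 : x s = false) :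
    heightAt x s = heightAt x (s-1) + 1 := by
  rw [heightAt_cnt, heightAt_cnt, cnt_succ_of x false h1 h2]
  push_cast
  omega

lemma heightAt_succ_true {x : ℕ → Bool} {s : ℕ} (h1 : 1 ≤ s) (h2 : x s = true) :
    heightAt x s = heightAt x (s-1) - 1 := by
  rw [heightAt_cnt, heightAt_cnt, cnt_succ_of_ne x false h1 (by simp [h2])]
  have := cnt_succ_of x true h1 h2
  have := cnt_add_cnt x s
  have h3 : 1 ≤ cnt x true s := cnt_pos_of x true h1 h2
  have := cnt_add_cnt x (s-1)
  push_cast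
  omega

lemma true_of_height_lt {x : ℕ → Bool} {s : ℕ} (h1 : 1 ≤ s)
    (h : heightAt x s < heightAt x (s-1)) : x s = true := by
  cases h2 : x s
  · rw [heightAt_succ_false h1 h2] at h; omega
  · rfl

lemma partnered_unique {p : ℕ → Bool} {a b b' : ℕ} (h : Partnered p a b)
    (h' : Partnered p a b') : b = b' := by
  rcases lt_trichotomy b b' with hlt | he | hlt
  · exfalso
    have := h'.2.2 b (le_of_lt h.1) hlt
    have := h.2.1
    omega
  · exact he
  · exfalso
    have := h.2.2 b' (le_of_lt h'.1) hlt
    have := h'.2.1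
    omega

section dyck
variable {m : ℕ} {q : ℕ → Bool}

lemma dyck_cnt_true (hq : IsDyckWord (2*m) q) : cnt q true (2*m) = m := by
  have h := hq.1
  unfold cnt
  omega

lemma dyck_cnt_false (hq : IsDyckWord (2*m) q) : cnt q false (2*m) = m := by
  have := dyck_cnt_true hq
  have := cnt_add_cnt q (2*m)
  omega

lemma dyck_height_nonneg (hq : IsDyckWord (2*m) q) {t : ℕ} (ht : t ≤ 2*m) :
    0 ≤ heightAt q t := by
  have h := hq.2 t ht
  have h2 : 2 * cnt q true t ≤ t := h
  have := cnt_add_cnt q t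
  rw [heightAt_cnt]
  push_cast
  omega

lemma dyck_height_end (hq : IsDyckWord (2*m) q) : heightAt q (2*m) = 0 := by
  rw [heightAt_cnt, dyck_cnt_false hq]
  push_cast
  omega

/-- every up-step of a Dyck word has a partner -/
lemma dyck_partner (hq : IsDyckWord (2*m) q) {i : ℕ} (hi1 : 1 ≤ i) (hi2 : i ≤ m) :
    ∃ b, Partnered q (nth q false i) b ∧ IsNthOne q (cnt q true b) b ∧
      b ≤ 2*m ∧ 1 ≤ cnt q true b ∧ cnt q true b ≤ m := by
  have hex : i ≤ cnt q false (2*m) := by rw [dyck_cnt_false hq]; exact hi2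
  set a := nth q false i with ha
  have ha1 : 1 ≤ a := nth_pos hi1 hex
  have ha2 : q a = false := apply_nth hi1 hex
  have ha3 : a ≤ 2*m := nth_le hi1 hex
  have hstep : heightAt q a = heightAt q (a-1) + 1 := heightAt_succ_false ha1 ha2
  have hnn : 0 ≤ heightAt q (a-1) := dyck_height_nonneg hq (by omega)
  have ha4 : a < 2*m := by
    rcases eq_or_lt_of_le ha3 with he | h
    · exfalso
      have := dyck_height_end hq
      rw [← he, hstep] at this
      omega
    · exact h
  set S := {s | a < s ∧ heightAt q s ≤ heightAt q (a-1)} with hS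
  have hSne : (2*m) ∈ S := ⟨ha4, by rw [dyck_height_end hq]; exact hnn⟩
  set b := sInf S with hb
  have hbS : b ∈ S := Nat.sInf_mem ⟨2*m, hSne⟩
  have hb1 : a < b := hbS.1
  have hb2 : heightAt q b ≤ heightAt q (a-1) := hbS.2
  have hb3 : b ≤ 2*m := Nat.sInf_le hSne
  have hprev : heightAt q (a-1) < heightAt q (b-1) := by
    rcases eq_or_lt_of_le (show a ≤ b - 1 by omega) with he | h
    · rw [← he]; omega
    · by_contra hc
      have : b - 1 ∈ S := ⟨h, by omega⟩
      have := Nat.sInf_le this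
      omega
  have hqb : q b = true := by
    apply true_of_height_lt (by omega)
    omega
  have hstepb : heightAt q b = heightAt q (b-1) - 1 := heightAt_succ_true (by omega) hqb
  have hbeq : heightAt q b = heightAt q (a-1) := by omega
  have hcnt1 : 1 ≤ cnt q true b := cnt_pos_of q true (by omega) hqb
  have hcnt2 : cnt q true b ≤ m := by
    have := cnt_mono q true hb3
    have := dyck_cnt_true hq
    omega
  refine ⟨b, ⟨hb1, hbeq, ?_⟩, ⟨by omega, hqb, rfl⟩, hb3, hcnt1, hcnt2⟩
  intro t ht1 ht2
  rcases eq_or_lt_of_le ht1 with rfl | h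
  · omega
  · by_contra hc
    have : t ∈ S := ⟨h, by omega⟩
    have := Nat.sInf_le this
    omega

end dyck

section formula
variable {m : ℕ} {σ τ : ℕ → ℕ} {q : ℕ → Bool}

/-- a Dyck word whose up-steps are partnered according to `σ` has its zeros at the
positions `aa σ i`. -/
lemma dyck_a_formula (hg : Good m σ τ) (hq : IsDyckWord (2*m) q)
    (hpart : ∀ i, 1 ≤ i → i ≤ m → Partnered q (nth q false i) (nth q true (σ i)))
    {i : ℕ} (hi1 : 1 ≤ i) (hi2 : i ≤ m) : nth q false i = aa σ i := by
  have hexf : ∀ {i' : ℕ}, i' ≤ m → i' ≤ cnt q false (2*m) := by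
    intro i' h; rw [dyck_cnt_false hq]; exact h
  have hext : ∀ {l : ℕ}, l ≤ m → l ≤ cnt q true (2*m) := by
    intro l h; rw [dyck_cnt_true hq]; exact h
  set a := nth q false i with ha
  have ha1 : 1 ≤ a := nth_pos hi1 (hexf hi2)
  have ha2 : q a = false := apply_nth hi1 (hexf hi2)
  have ha3 : a ≤ 2*m := nth_le hi1 (hexf hi2)
  have hcfa : cnt q false a = i := cnt_nth hi1 (hexf hi2)
  have hsum : a = i + cnt q true a := by
    have := cnt_add_cnt q a
    omega
  have hcta : cnt q true a ≤ m := by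
    have := cnt_mono q true ha3
    have := dyck_cnt_true hq
    omega
  -- the set of one-indices whose position is below a
  have hkey : (Finset.Icc 1 m).filter (fun l => nth q true l < a) =
      Finset.Icc 1 (cnt q true a) := by
    ext l
    simp only [Finset.mem_filter, Finset.mem_Icc]
    constructor
    · rintro ⟨⟨h1, h2⟩, h3⟩
      refine ⟨h1, ?_⟩
      have := (nth_le_iff (hext h2)).mp (le_of_lt h3)
      exact this
    · rintro ⟨h1, h2⟩
      refine ⟨⟨h1, by omega⟩, ?_⟩
      have h3 : nth q true l ≤ a := (nth_le_iff (hext (by omega))).mpr h2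
      rcases eq_or_lt_of_le h3 with he | h
      · exfalso
        have := apply_nth h1 (hext (show l ≤ m by omega)) (x := q) (v := true)
        rw [he, ha2] at this
        exact Bool.noConfusion this
      · exact h
  -- bijection with {k < i : σ k < σ i}
  have hbij : ((Finset.Icc 1 m).filter (fun l => nth q true l < a)).card = Aw σ i := by
    unfold Aw
    apply Finset.card_bij (fun l _ => τ l)
    · intro l hl
      simp only [Finset.mem_filter, Finset.mem_Icc] at hl
      obtain ⟨⟨hl1, hl2⟩, hl3⟩ := hl
      have hk := hg.mem' l hl1 hl2
      have hkσ := hg.inv' l hl1 hl2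
      have hP := hpart (τ l) hk.1 hk.2
      rw [hkσ] at hP
      simp only [Finset.mem_filter, Finset.mem_Ico]
      have hak : nth q false (τ l) < a := lt_trans hP.1 hl3
      have hki : τ l < i := by
        by_contra hc
        push_neg at hc
        rcases eq_or_lt_of_le hc with rfl | h
        · omega
        · have := nth_strictMonoOn hi1 h (hexf hk.2) (x := q) (v := false)
          omega
      have hPi := hpart i hi1 hi2
      have hli : l < σ i := by
        by_contra hc
        push_neg at hc
        rcases eq_or_lt_of_le hc with he | h
        · rw [he] at hPi
          have := hPi.1
          omega
        · have hσm := (hg.mem i hi1 hi2).2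
          have := nth_strictMonoOn (show 1 ≤ σ i from (hg.mem i hi1 hi2).1) h
            (hext hl2) (x := q) (v := true)
          have := hPi.1
          omega
      rw [hkσ]
      exact ⟨⟨hk.1, hki⟩, hli⟩
    · intro l hl l' hl' he
      simp only [Finset.mem_filter, Finset.mem_Icc] at hl hl'
      have e1 := hg.inv' l hl.1.1 hl.1.2
      have e2 := hg.inv' l' hl'.1.1 hl'.1.2
      rw [← e1, ← e2, he]
    · intro k hk
      simp only [Finset.mem_filter, Finset.mem_Ico] at hk
      obtain ⟨⟨hk1, hk2⟩, hk3⟩ := hk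
      have hkm : k ≤ m := by omega
      have hσk := hg.mem k hk1 hkm
      refine ⟨σ k, ?_, hg.inv k hk1 hkm⟩
      simp only [Finset.mem_filter, Finset.mem_Icc]
      refine ⟨⟨hσk.1, hσk.2⟩, ?_⟩
      -- show nth q true (σ k) < a
      have hP := hpart k hk1 hkm
      have hPi := hpart i hi1 hi2
      by_contra hc
      push_neg at hc
      have hne : nth q true (σ k) ≠ a := by
        intro he
        have := apply_nth hσk.1 (hext hσk.2) (x := q) (v := true)
        rw [he, ha2] at this
        exact Bool.noConfusion this
      have hgt : a < nth q true (σ k) := by omega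
      -- interior of arc k at a - 1
      have hmono : nth q false k < a := by
        have := nth_strictMonoOn hk1 hk2 (hexf hi2) (x := q) (v := false)
        omega
      have h1 : heightAt q (nth q false k - 1) < heightAt q (a - 1) :=
        hP.2.2 (a-1) (by omega) (by omega)
      -- interior of arc i at nth q true (σ k)
      have hbmono : nth q true (σ k) < nth q true (σ i) := by
        exact nth_strictMonoOn hσk.1 hk3 (hext (hg.mem i hi1 hi2).2)
      have h2 : heightAt q (a - 1) < heightAt q (nth q true (σ k)) :=
        hPi.2.2 (nth q true (σ k)) (by omega) hbmono
      have h3 := hP.2.1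
      omega
  rw [hkey] at hbij
  simp only [Nat.card_Icc] at hbij
  unfold aa
  omega

/-- if the dyck word `q` is partnered according to `σ`, it equals `pw m σ` on `[1,2m]`. -/
lemma dyck_eq_pw (hg : Good m σ τ) (hq : IsDyckWord (2*m) q)
    (hpart : ∀ i, 1 ≤ i → i ≤ m → Partnered q (nth q false i) (nth q true (σ i)))
    {t : ℕ} (ht1 : 1 ≤ t) (ht2 : t ≤ 2*m) : q t = pw m σ t := by
  cases hqt : q t
  · have hi1 : 1 ≤ cnt q false t := cnt_pos_of q false ht1 hqt
    have hi2 : cnt q false t ≤ m := by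
      have := cnt_mono q false ht2
      have := dyck_cnt_false hq
      omega
    have : t = nth q false (cnt q false t) :=
      nth_unique hi1 (by rw [dyck_cnt_false hq]; exact hi2) ht1 hqt rfl
    rw [dyck_a_formula hg hq hpart hi1 hi2] at this
    symm
    rw [pw_false_iff]
    exact ⟨cnt q false t, hi1, hi2, this.symm⟩
  · symm
    rw [pw_true_iff]
    intro i h1 h2 he
    rw [← dyck_a_formula hg hq hpart h1 h2] at he
    have := apply_nth h1 (by rw [dyck_cnt_false hq]; exact h2) (x := q) (v := false)
    rw [he, hqt] at this
    exact Bool.noConfusion this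

end formula

end S17

namespace S17

open Classical in
noncomputable def nbr (M : SimpleGraph ℕ) : ℕ → ℕ :=
  fun s => if h : ∃ y, M.Adj s y then h.choose else 0

lemma nbr_eq {m : ℕ} {M : SimpleGraph ℕ} (hM : IsMatchingOn (2*m) M) {x y : ℕ}
    (h : M.Adj x y) : nbr M x = y := by
  obtain ⟨hx1, hx2, -, -⟩ := hM.1 x y h
  obtain ⟨u, hu, huniq⟩ := hM.2 x hx1 hx2
  have h1 : M.Adj x (nbr M x) := by
    unfold nbr
    rw [dif_pos ⟨y, h⟩]
    exact Exists.choose_spec (⟨y, h⟩ : ∃ y, M.Adj x y)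
  rw [huniq _ h1, huniq _ h]

section Main

variable {m : ℕ} {w : ℕ → Bool} {M : SimpleGraph ℕ}

noncomputable def sigM (w : ℕ → Bool) (M : SimpleGraph ℕ) (i : ℕ) : ℕ :=
  cnt w true (nbr M (nth w false i))

noncomputable def tauM (w : ℕ → Bool) (M : SimpleGraph ℕ) (l : ℕ) : ℕ :=
  cnt w false (nbr M (nth w true l))

variable (hw : IsDyckWord (2*m) w) (hM : IsMatchingOn (2*m) M)
  (hbase : HasBase (2*m) M w)

include hw hM in
lemma nbr_adj {x : ℕ} (h1 : 1 ≤ x) (h2 : x ≤ 2*m) : M.Adj x (nbr M x) := by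
  obtain ⟨y, hy, -⟩ := hM.2 x h1 h2
  unfold nbr
  rw [dif_pos ⟨y, hy⟩]
  exact (⟨y, hy⟩ : ∃ y, M.Adj x y).choose_spec

include hw hM hbase in
lemma U_facts {i : ℕ} (hi1 : 1 ≤ i) (hi2 : i ≤ m) :
    1 ≤ nth w false i ∧ nth w false i ≤ 2*m ∧ w (nth w false i) = false ∧
    cnt w false (nth w false i) = i ∧
    nth w false i < nbr M (nth w false i) ∧
    M.Adj (nth w false i) (nbr M (nth w false i)) ∧
    w (nbr M (nth w false i)) = true ∧
    1 ≤ nbr M (nth w false i) ∧ nbr M (nth w false i) ≤ 2*m ∧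
    1 ≤ sigM w M i ∧ sigM w M i ≤ m ∧
    nth w true (sigM w M i) = nbr M (nth w false i) := by
  have hexf : i ≤ cnt w false (2*m) := by rw [dyck_cnt_false hw]; exact hi2
  set a := nth w false i with ha
  have ha1 : 1 ≤ a := nth_pos hi1 hexf
  have ha2 : a ≤ 2*m := nth_le hi1 hexf
  have ha3 : w a = false := apply_nth hi1 hexf
  have ha4 : cnt w false a = i := cnt_nth hi1 hexf
  have hadj : M.Adj a (nbr M a) := nbr_adj hw hM ha1 ha2
  have hnb := hM.1 a (nbr M a) hadj
  have hlt : a < nbr M a := by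
    have hno : ¬ ∃ j, j < a ∧ M.Adj a j := by
      intro hex
      have := (hbase a ha1 ha2).mpr hex
      rw [ha3] at this
      exact Bool.noConfusion this
    have hne : a ≠ nbr M a := (M.ne_of_adj hadj)
    by_contra hc
    exact hno ⟨nbr M a, by omega, hadj⟩
  have hwn : w (nbr M a) = true :=
    (hbase (nbr M a) (by omega) (by omega)).mpr ⟨a, hlt, hadj.symm⟩
  have hs1 : 1 ≤ cnt w true (nbr M a) := cnt_pos_of w true (by omega) hwn
  have hs2 : cnt w true (nbr M a) ≤ m := by
    have := cnt_mono w true (show nbr M a ≤ 2*m by omega)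
    have := dyck_cnt_true hw
    omega
  have hV : nth w true (cnt w true (nbr M a)) = nbr M a := by
    symm
    exact nth_unique hs1 (by rw [dyck_cnt_true hw]; exact hs2) (by omega) hwn rfl
  have hsig : sigM w M i = cnt w true (nbr M a) := by unfold sigM; rw [← ha]
  rw [hsig]
  exact ⟨ha1, ha2, ha3, ha4, hlt, hadj, hwn, by omega, by omega, hs1, hs2, hV⟩

include hw hM hbase in
lemma V_facts {l : ℕ} (hl1 : 1 ≤ l) (hl2 : l ≤ m) :
    1 ≤ nth w true l ∧ nth w true l ≤ 2*m ∧ w (nth w true l) = true ∧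
    cnt w true (nth w true l) = l ∧
    nbr M (nth w true l) < nth w true l ∧
    M.Adj (nth w true l) (nbr M (nth w true l)) ∧
    w (nbr M (nth w true l)) = false ∧
    1 ≤ nbr M (nth w true l) ∧
    1 ≤ tauM w M l ∧ tauM w M l ≤ m ∧
    nth w false (tauM w M l) = nbr M (nth w true l) := by
  have hext : l ≤ cnt w true (2*m) := by rw [dyck_cnt_true hw]; exact hl2
  set b := nth w true l with hbdef
  have hb1 : 1 ≤ b := nth_pos hl1 hext
  have hb2 : b ≤ 2*m := nth_le hl1 hext
  have hb3 : w b = true := apply_nth hl1 hext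
  have hb4 : cnt w true b = l := cnt_nth hl1 hext
  have hadj : M.Adj b (nbr M b) := nbr_adj hw hM hb1 hb2
  have hnb := hM.1 b (nbr M b) hadj
  have hlt : nbr M b < b := by
    obtain ⟨j, hj1, hj2⟩ := (hbase b hb1 hb2).mp hb3
    have := nbr_eq hM hj2
    omega
  have hwn : w (nbr M b) = false := by
    by_contra hc
    have hc' : w (nbr M b) = true := by
      cases h : w (nbr M b)
      · exact absurd h hc
      · rfl
    obtain ⟨j, hj1, hj2⟩ := (hbase (nbr M b) (by omega) (by omega)).mp hc'
    have h1 := nbr_eq hM hj2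
    have h2 := nbr_eq hM hadj.symm
    omega
  have ht1 : 1 ≤ cnt w false (nbr M b) := cnt_pos_of w false (by omega) hwn
  have ht2 : cnt w false (nbr M b) ≤ m := by
    have := cnt_mono w false (show nbr M b ≤ 2*m by omega)
    have := dyck_cnt_false hw
    omega
  have hU : nth w false (cnt w false (nbr M b)) = nbr M b := by
    symm
    exact nth_unique ht1 (by rw [dyck_cnt_false hw]; exact ht2) (by omega) hwn rfl
  have htau : tauM w M l = cnt w false (nbr M b) := by unfold tauM; rw [← hbdef]
  rw [htau]
  exact ⟨hb1, hb2, hb3, hb4, hlt, hadj, hwn, by omega, ht1, ht2, hU⟩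

include hw hM hbase in
set_option maxHeartbeats 1000000 in
lemma good_sigM (havoid : ¬ ContainsPat M M231) : Good m (sigM w M) (tauM w M) := by
  have hUf := fun {i} (h1 : 1 ≤ i) (h2 : i ≤ m) => U_facts hw hM hbase h1 h2
  have hVf := fun {l} (h1 : 1 ≤ l) (h2 : l ≤ m) => V_facts hw hM hbase h1 h2
  constructor
  · intro i h1 h2
    obtain ⟨_, _, _, _, _, _, _, _, _, hs1, hs2, _⟩ := hUf h1 h2
    exact ⟨hs1, hs2⟩
  · intro i h1 h2
    obtain ⟨_, _, _, h4, _, hadj, _, _, _, hs1, hs2, hV⟩ := hUf h1 h2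
    unfold tauM
    rw [hV]
    rw [nbr_eq hM hadj.symm]
    exact h4
  · intro l h1 h2
    obtain ⟨_, _, _, _, _, _, _, _, ht1, ht2, _⟩ := hVf h1 h2
    exact ⟨ht1, ht2⟩
  · intro l h1 h2
    obtain ⟨_, _, _, h4, _, hadj, _, _, _, _, hU⟩ := hVf h1 h2
    unfold sigM
    rw [hU]
    rw [nbr_eq hM hadj.symm]
    exact h4
  · -- avoidance
    intro k i j hk1 hki hij hjm h231a h231b
    apply havoid
    obtain ⟨hUk1, _, _, _, hUVk, hadjk, _, _, _, hsk1, hsk2, hVk⟩ := hUf hk1 (by omega)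
    obtain ⟨_, _, _, _, hUVi, hadji, _, _, _, hsi1, hsi2, hVi⟩ := hUf (by omega : 1 ≤ i) (by omega)
    obtain ⟨_, _, _, _, hUVj, hadjj, _, _, _, hsj1, hsj2, hVj⟩ := hUf (by omega : 1 ≤ j) hjm
    have hexf : ∀ {i' : ℕ}, i' ≤ m → i' ≤ cnt w false (2*m) := by
      intro i' h; rw [dyck_cnt_false hw]; exact h
    have hext : ∀ {l : ℕ}, l ≤ m → l ≤ cnt w true (2*m) := by
      intro l h; rw [dyck_cnt_true hw]; exact h
    set x1 := nth w false k
    set x2 := nth w false i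
    set x3 := nth w false j
    set y3 := nth w true (sigM w M j)
    set y1 := nth w true (sigM w M k)
    set y2 := nth w true (sigM w M i)
    have h12 : x1 < x2 := nth_strictMonoOn hk1 hki (hexf (by omega))
    have h23 : x2 < x3 := nth_strictMonoOn (by omega) hij (hexf hjm)
    have h34 : x3 < y3 := by rw [hVj]; exact hUVj
    have h45 : y3 < y1 := nth_strictMonoOn hsj1 h231a (hext hsk2)
    have h56 : y1 < y2 := nth_strictMonoOn hsk1 h231b (hext hsi2)
    refine ⟨fun t => match t with
      | 0 => 0 | 1 => x1 | 2 => x2 | 3 => x3 | 4 => y3 | 5 => y1 | (n+6) => y2 + n, ?_, ?_⟩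
    · apply strictMono_nat_of_lt_succ
      intro n
      match n with
      | 0 => simpa using Nat.lt_of_lt_of_le Nat.zero_lt_one hUk1
      | 1 => simpa using h12
      | 2 => simpa using h23
      | 3 => simpa using h34
      | 4 => simpa using h45
      | 5 => simpa using h56
      | (n+6) => simp
    · intro u v huv
      rw [M231, SimpleGraph.fromRel_adj] at huv
      obtain ⟨hne, hor⟩ := huv
      have e1 : M.Adj x1 y1 := by rw [hVk]; exact hadjk
      have e2 : M.Adj x2 y2 := by rw [hVi]; exact hadji
      have e3 : M.Adj x3 y3 := by rw [hVj]; exact hadjj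
      have hcase : (u = 1 ∧ v = 5) ∨ (u = 2 ∧ v = 6) ∨ (u = 3 ∧ v = 4) ∨
          (v = 1 ∧ u = 5) ∨ (v = 2 ∧ u = 6) ∨ (v = 3 ∧ u = 4) := by
        rcases hor with h | h <;>
          simp only [List.mem_cons, List.mem_singleton, List.not_mem_nil, or_false,
            Prod.mk.injEq] at h <;> tauto
      rcases hcase with ⟨rfl, rfl⟩ | ⟨rfl, rfl⟩ | ⟨rfl, rfl⟩ | ⟨rfl, rfl⟩ | ⟨rfl, rfl⟩ | ⟨rfl, rfl⟩
      · exact e1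
      · exact e2
      · exact e3
      · exact e1.symm
      · exact e2.symm
      · exact e3.symm

end Main

end S17

namespace S17

section Main2

variable {m : ℕ} {w : ℕ → Bool} {M : SimpleGraph ℕ}
variable (hw : IsDyckWord (2*m) w) (hM : IsMatchingOn (2*m) M)
  (hbase : HasBase (2*m) M w)

include hw hM hbase in
/-- C3 : the i-th zero of `w` is at most `aa σ i`. -/
lemma U_le_aa (hg : Good m (sigM w M) (tauM w M)) {i : ℕ} (hi1 : 1 ≤ i) (hi2 : i ≤ m) :
    nth w false i ≤ aa (sigM w M) i := by
  obtain ⟨ha1, ha2, ha3, ha4, hlt, hadj, hwn, hn1, hn2, hs1, hs2, hV⟩ :=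
    U_facts hw hM hbase hi1 hi2
  have hsum : nth w false i = i + cnt w true (nth w false i) := by
    have := cnt_add_cnt w (nth w false i)
    omega
  have hK : cnt w true (nth w false i) ≤ m := by
    have := cnt_mono w true ha2
    have := dyck_cnt_true hw
    omega
  suffices h : cnt w true (nth w false i) ≤ Aw (sigM w M) i by
    unfold aa
    omega
  unfold Aw
  have : cnt w true (nth w false i) = (Finset.Icc 1 (cnt w true (nth w false i))).card := by
    simp
  rw [this]
  apply Finset.card_le_card_of_injOn (fun l => tauM w M l)
  · intro l hl
    simp only [Finset.mem_coe, Finset.mem_Icc] at hl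
    obtain ⟨hl1, hl2⟩ := hl
    have hlm : l ≤ m := by omega
    obtain ⟨hb1, hb2, hb3, hb4, hblt, hbadj, hbwn, hbn1, ht1, ht2, hU⟩ :=
      V_facts hw hM hbase hl1 hlm
    have hVle : nth w true l ≤ nth w false i :=
      (nth_le_iff (by rw [dyck_cnt_true hw]; exact hlm)).mpr hl2
    have hVne : nth w true l ≠ nth w false i := by
      intro he
      rw [he, ha3] at hb3
      exact Bool.noConfusion hb3
    have hVlt : nth w true l < nth w false i := by omega
    -- k := tauM l < i
    have hUk : nth w false (tauM w M l) < nth w false i := by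
      rw [hU]; omega
    have hki : tauM w M l < i := by
      by_contra hc
      push_neg at hc
      rcases eq_or_lt_of_le hc with rfl | h
      · omega
      · have := nth_strictMonoOn hi1 h (by rw [dyck_cnt_false hw]; exact ht2)
          (x := w) (v := false)
        omega
    -- l < σ i
    have hlσ : l < sigM w M i := by
      have hVV : nth w true l < nth w true (sigM w M i) := by
        rw [hV]; omega
      by_contra hc
      push_neg at hc
      rcases eq_or_lt_of_le hc with rfl | h
      · omega
      · have := nth_strictMonoOn hs1 h (by rw [dyck_cnt_true hw]; exact hlm)
          (x := w) (v := true)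
        omega
    simp only [Finset.mem_coe, Finset.mem_filter, Finset.mem_Ico]
    have := hg.inv' l hl1 hlm
    exact ⟨⟨ht1, hki⟩, by rw [this]; exact hlσ⟩
  · intro l hl l' hl' he
    simp only [Finset.coe_Icc, Set.mem_Icc] at hl hl'
    replace he : tauM w M l = tauM w M l' := he
    have e1 := hg.inv' l hl.1 (by omega)
    have e2 := hg.inv' l' hl'.1 (by omega)
    rw [← e1, ← e2, he]

include hw hM hbase in
lemma M_eq_Mwp (hg : Good m (sigM w M) (tauM w M)) :
    M = Mwp (2*m) w (pw m (sigM w M)) := by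
  have hrel_of_adj : ∀ x y : ℕ, M.Adj x y → x < y →
      (∃ i j a b : ℕ, a ≤ 2*m ∧ b ≤ 2*m ∧ x ≤ 2*m ∧ y ≤ 2*m ∧
        IsNthZero (pw m (sigM w M)) i a ∧ IsNthOne (pw m (sigM w M)) j b ∧
        Partnered (pw m (sigM w M)) a b ∧ IsNthZero w i x ∧ IsNthOne w j y) := by
    intro x y hadj hxy
    obtain ⟨hx1, hx2, hy1, hy2⟩ := hM.1 x y hadj
    have hwx : w x = false := by
      cases hwx : w x
      · rfl
      · exfalso
        obtain ⟨j, hj1, hj2⟩ := (hbase x hx1 hx2).mp hwx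
        have e1 := nbr_eq hM hj2
        have e2 := nbr_eq hM hadj
        omega
    set i := cnt w false x with hidef
    have hi1 : 1 ≤ i := cnt_pos_of w false hx1 hwx
    have hi2 : i ≤ m := by
      have := cnt_mono w false hx2
      have := dyck_cnt_false hw
      omega
    have hxU : x = nth w false i := nth_unique hi1 (by rw [dyck_cnt_false hw]; exact hi2)
      hx1 hwx rfl
    obtain ⟨ha1, ha2, ha3, ha4, hlt, hadj', hwn, hn1, hn2, hs1, hs2, hV⟩ :=
      U_facts hw hM hbase hi1 hi2
    have hyV : y = nth w true (sigM w M i) := by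
      rw [hV, ← hxU]
      exact (nbr_eq hM hadj).symm
    refine ⟨i, sigM w M i, aa (sigM w M) i, bb (sigM w M) i, ?_, hg.bb_le hi1 hi2,
      hx2, hy2, hg.isNthZero_aa hi1 hi2, hg.isNthOne_bb hi1 hi2, hg.partnered hi1 hi2,
      ⟨hx1, hwx, hidef.symm⟩, ?_⟩
    · have := hg.aa_ub hi1
      omega
    · rw [hyV]
      exact ⟨nth_pos hs1 (by rw [dyck_cnt_true hw]; exact hs2),
        apply_nth hs1 (by rw [dyck_cnt_true hw]; exact hs2),
        cnt_nth hs1 (by rw [dyck_cnt_true hw]; exact hs2)⟩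
  have hadj_of_rel : ∀ x y : ℕ,
      (∃ i j a b : ℕ, a ≤ 2*m ∧ b ≤ 2*m ∧ x ≤ 2*m ∧ y ≤ 2*m ∧
        IsNthZero (pw m (sigM w M)) i a ∧ IsNthOne (pw m (sigM w M)) j b ∧
        Partnered (pw m (sigM w M)) a b ∧ IsNthZero w i x ∧ IsNthOne w j y) →
      M.Adj x y := by
    rintro x y ⟨i, j, a, b, ha2m, hb2m, hx2m, hy2m, ⟨hpa1, hpa2, hpa3⟩, ⟨hpb1, hpb2, hpb3⟩,
      hP, ⟨hwx1, hwx2, hwx3⟩, ⟨hwy1, hwy2, hwy3⟩⟩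
    have hpa3' : cnt (pw m (sigM w M)) false a = i := hpa3
    have hpb3' : cnt (pw m (sigM w M)) true b = j := hpb3
    have hwx3' : cnt w false x = i := hwx3
    have hwy3' : cnt w true y = j := hwy3
    have hcnt2m : cnt (pw m (sigM w M)) false (2*m) = m := by
      rw [hg.cnt_pw_false (le_refl _), hg.Za_2m]
    have hi1 : 1 ≤ i := by
      have := cnt_pos_of (pw m (sigM w M)) false hpa1 hpa2
      omega
    have hi2 : i ≤ m := by
      have := cnt_mono (pw m (sigM w M)) false ha2m
      omega
    -- a = aa σ i
    have hZa : IsNthZero (pw m (sigM w M)) i (aa (sigM w M) i) := hg.isNthZero_aa hi1 hi2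
    have hZa3 : cnt (pw m (sigM w M)) false (aa (sigM w M) i) = i := hZa.2.2
    have ha_eq : a = aa (sigM w M) i :=
      eq_of_cnt_eq hpa1 hZa.1 hpa2 hZa.2.1 (by rw [hpa3', hZa3])
    -- b = bb σ i
    have hb_eq : b = bb (sigM w M) i := by
      apply partnered_unique (a := aa (sigM w M) i)
      · rw [← ha_eq]; exact hP
      · exact hg.partnered hi1 hi2
    -- j = σ i
    have hj_eq : j = sigM w M i := by
      rw [← hpb3', hb_eq]
      exact hg.cnt_true_bb hi1 hi2
    obtain ⟨ha1, ha2', ha3, ha4, hlt, hadj', hwn, hn1, hn2, hs1, hs2, hV⟩ :=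
      U_facts hw hM hbase hi1 hi2
    have hx_eq : x = nth w false i := nth_unique hi1 (by rw [dyck_cnt_false hw]; exact hi2)
      hwx1 hwx2 hwx3'
    have hy_eq : y = nth w true (sigM w M i) := by
      rw [hj_eq] at hwy3'
      exact nth_unique hs1 (by rw [dyck_cnt_true hw]; exact hs2) hwy1 hwy2 hwy3'
    rw [hx_eq, hy_eq, hV]
    exact hadj'
  ext x y
  rw [Mwp, SimpleGraph.fromRel_adj]
  constructor
  · intro hadj
    refine ⟨M.ne_of_adj hadj, ?_⟩
    rcases lt_or_gt_of_ne (M.ne_of_adj hadj) with h | h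
    · exact Or.inl (hrel_of_adj x y hadj h)
    · exact Or.inr (hrel_of_adj y x hadj.symm h)
  · rintro ⟨hne, h | h⟩
    · exact hadj_of_rel x y h
    · exact (hadj_of_rel y x h).symm

include hw hM hbase in
lemma q_eq_pw (hg : Good m (sigM w M) (tauM w M)) {q : ℕ → Bool}
    (hq : IsDyckWord (2*m) q) (hMq : M = Mwp (2*m) w q) {t : ℕ}
    (ht1 : 1 ≤ t) (ht2 : t ≤ 2*m) : q t = pw m (sigM w M) t := by
  have hpart : ∀ i, 1 ≤ i → i ≤ m →
      Partnered q (nth q false i) (nth q true (sigM w M i)) := by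
    intro i hi1 hi2
    obtain ⟨b, hPart, hNth, hb2m, hj1, hj2⟩ := dyck_partner hq hi1 hi2
    obtain ⟨ha1, ha2, ha3, ha4, hlt, hadj', hwn, hn1, hn2, hs1, hs2, hV⟩ :=
      U_facts hw hM hbase hi1 hi2
    obtain ⟨hb1, hb2', hb3, hb4, hblt, hbadj, hbwn, hbn1, hbt1, hbt2, hbU⟩ :=
      V_facts hw hM hbase hj1 hj2
    have hrel : (Mwp (2*m) w q).Adj (nth w false i) (nth w true (cnt q true b)) := by
      rw [Mwp, SimpleGraph.fromRel_adj]
      refine ⟨?_, Or.inl ⟨i, cnt q true b, nth q false i, b,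
        nth_le hi1 (by rw [dyck_cnt_false hq]; exact hi2), hb2m, ha2, hb2', ?_, hNth, hPart,
        ⟨ha1, ha3, ha4⟩, ⟨hb1, hb3, hb4⟩⟩⟩
      · intro he
        rw [he, hb3] at ha3
        exact Bool.noConfusion ha3
      · exact ⟨nth_pos hi1 (by rw [dyck_cnt_false hq]; exact hi2),
          apply_nth hi1 (by rw [dyck_cnt_false hq]; exact hi2),
          cnt_nth hi1 (by rw [dyck_cnt_false hq]; exact hi2)⟩
    have hadj : M.Adj (nth w false i) (nth w true (cnt q true b)) := by
      rw [hMq]; exact hrel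
    have hnbr : nbr M (nth w false i) = nth w true (cnt q true b) := nbr_eq hM hadj
    have hσi : sigM w M i = cnt q true b := by
      unfold sigM
      rw [hnbr]
      exact hb4
    have hb_eq : b = nth q true (cnt q true b) :=
      nth_unique hj1 (by rw [dyck_cnt_true hq]; exact hj2) (by
        have := hNth.1; omega) hNth.2.1 rfl
    rw [hσi, ← hb_eq]
    exact hPart
  exact dyck_eq_pw hg hq hpart ht1 ht2

end Main2

end S17
/-- every matching `M` on `[2m]` with base `w` avoiding `M_231` equals
`M(w,p)` for a Dyck word `p` not exceeding `w`, and `p` is unique (on positions `1,…,2m`). -/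
theorem stmt17 (m : ℕ) (w : ℕ → Bool) (hw : IsDyckWord (2*m) w)
    (M : SimpleGraph ℕ) (hM : IsMatchingOn (2*m) M) (hbase : HasBase (2*m) M w)
    (havoid : ¬ ContainsPat M M231) :
    ∃ p : ℕ → Bool, IsDyckWord (2*m) p ∧ DoesNotExceed (2*m) p w ∧ M = Mwp (2*m) w p ∧
      ∀ q : ℕ → Bool, IsDyckWord (2*m) q → DoesNotExceed (2*m) q w → M = Mwp (2*m) w q →
        ∀ t : ℕ, 1 ≤ t → t ≤ 2*m → q t = p t := by
  have hg : S17.Good m (S17.sigM w M) (S17.tauM w M) := S17.good_sigM hw hM hbase havoid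
  refine ⟨S17.pw m (S17.sigM w M), hg.pw_dyck, ?_, S17.M_eq_Mwp hw hM hbase hg, ?_⟩
  · -- does not exceed
    intro t ht
    rw [S17.heightAt_cnt, S17.heightAt_cnt]
    have h1 := hg.cnt_pw_false ht
    have h2 : S17.Za m (S17.sigM w M) t ≤ S17.cnt w false t := by
      unfold S17.Za S17.cnt
      apply Finset.card_le_card_of_injOn (fun i => S17.nth w false i)
      · intro i hi
        simp only [Finset.mem_coe, Finset.mem_filter, Finset.mem_Icc] at hi ⊢
        obtain ⟨⟨hi1, hi2⟩, hi3⟩ := hi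
        have hC3 := S17.U_le_aa hw hM hbase hg hi1 hi2
        exact ⟨⟨S17.nth_pos hi1 (by rw [S17.dyck_cnt_false hw]; exact hi2), by omega⟩,
          S17.apply_nth hi1 (by rw [S17.dyck_cnt_false hw]; exact hi2)⟩
      · intro i hi i' hi' he
        simp only [Finset.coe_filter, Set.mem_setOf_eq, Finset.mem_Icc] at hi hi'
        replace he : S17.nth w false i = S17.nth w false i' := he
        by_contra hc
        rcases lt_or_gt_of_ne hc with h | h
        · have := S17.nth_strictMonoOn hi.1.1 h
            (by rw [S17.dyck_cnt_false hw]; exact hi'.1.2) (x := w) (v := false)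
          omega
        · have := S17.nth_strictMonoOn hi'.1.1 h
            (by rw [S17.dyck_cnt_false hw]; exact hi.1.2) (x := w) (v := false)
          omega
    omega
  · intro q hq hqle hMq t ht1 ht2
    exact S17.q_eq_pw hw hM hbase hg hq hMq ht1 ht2
end
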